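/- arXiv:2409.20020 — 7 statements merged into one kernel-verified Lean document; each statement's English description precedes it below -/
import Mathlib

section
/- Let m ∈ ℕ and let p₀, p₁, …, p_m be real numbers. Define the symmetric Laurent polynomial P(e^{iω}) = p₀ + Σ_{k=1}^{m} p_k (e^{ikω} + e^{-ikω}) for ω ∈ ℝ, and suppose P(e^{iω}) > 0 for every ω ∈ ℝ. Then there exist complex numbers ℓ₀, ℓ₁, …, ℓ_m such that (i) P(e^{iω}) = |ℓ₀ + ℓ₁ e^{-iω} + ⋯ + ℓ_m e^{-imω}|² for all ω ∈ ℝ, and (ii) every root of the polynomial r(z) = ℓ₀ z^m + ℓ₁ z^{m−1} + ⋯ + ℓ_m lies in the open unit disk {z : |z| < 1}. -/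
open Complex Finset Polynomial

private noncomputable def refl' (N : ℕ) (μ : ℂ) (q : ℂ[X]) : ℂ[X] :=
  ∑ j ∈ Finset.range (N + 1), C (μ * (starRingEnd ℂ) (q.coeff j)) * X ^ (N - j)

private lemma refl'_eval (N : ℕ) (μ : ℂ) (q : ℂ[X]) (hq : q.natDegree ≤ N)
    {z : ℂ} (hz : z ≠ 0) :
    (refl' N μ q).eval z = μ * z ^ N * (starRingEnd ℂ) (q.eval ((starRingEnd ℂ) z)⁻¹) := by
  rw [q.eval_eq_sum_range' (Nat.lt_succ_of_le hq), map_sum, refl', eval_finset_sum,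
    Finset.mul_sum]
  apply Finset.sum_congr rfl
  intro j hj
  have hjN : j ≤ N := Nat.lt_succ_iff.mp (Finset.mem_range.mp hj)
  rw [eval_mul, eval_C, eval_pow, eval_X, pow_sub₀ z hz hjN]
  simp only [map_mul, map_pow, map_inv₀, Complex.conj_conj]
  ring

private lemma compl_finite_infinite (s : Set ℂ) (hs : s.Finite) : (sᶜ).Infinite :=
  hs.infinite_compl

private lemma degree_drop (n : ℕ) (μ : ℂ) (hμ : μ ≠ 0) (Q : ℂ[X]) (hd : Q.natDegree ≤ 2*n+1)
    (hsym : ∀ z : ℂ, z ≠ 0 →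
      Q.eval z = μ * z ^ (2*n) * (starRingEnd ℂ) (Q.eval ((starRingEnd ℂ) z)⁻¹)) :
    Q.natDegree ≤ 2*n := by
  have key : X * Q = refl' (2*n+1) μ Q := by
    apply Polynomial.eq_of_infinite_eval_eq
    apply Set.Infinite.mono (s := ({0}ᶜ : Set ℂ))
    · intro z hz
      have hz' : z ≠ 0 := hz
      simp only [Set.mem_setOf_eq, eval_mul, eval_X]
      rw [refl'_eval _ _ _ hd hz', hsym z hz']
      ring
    · exact compl_finite_infinite _ (Set.finite_singleton 0)
  have h0 : (X * Q).coeff 0 = (refl' (2*n+1) μ Q).coeff 0 := by rw [key]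
  have hXQ : (X * Q).coeff 0 = 0 := by simp [coeff_X_mul]
  have hR : (refl' (2*n+1) μ Q).coeff 0 = μ * (starRingEnd ℂ) (Q.coeff (2*n+1)) := by
    rw [refl', finset_sum_coeff]
    rw [Finset.sum_eq_single (2*n+1)]
    · simp
    · intro j hj hne
      have hjle : j ≤ 2*n+1 := Nat.lt_succ_iff.mp (Finset.mem_range.mp hj)
      rw [coeff_C_mul, coeff_X_pow]
      have : 2*n+1-j ≠ 0 := by omega
      simp [this.symm, this]
    · intro h; exact absurd (Finset.self_mem_range_succ _) h
  have hc : Q.coeff (2*n+1) = 0 := by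
    rw [hXQ, hR] at h0
    have := mul_eq_zero.mp h0.symm
    rcases this with h | h
    · exact absurd h hμ
    · simpa using h
  rw [natDegree_le_iff_coeff_eq_zero]
  intro N hN
  rcases Nat.lt_or_ge N (2*n+2) with h | h
  · have : N = 2*n+1 := by omega
    rw [this]; exact hc
  · exact coeff_eq_zero_of_natDegree_lt (by omega)

private lemma fejer_riesz_aux : ∀ (n : ℕ) (Q : ℂ[X]) (μ : ℂ), μ ≠ 0 →
    Q.natDegree ≤ 2*n →
    (∀ u : ℂ, ‖u‖ = 1 → Q.eval u ≠ 0) →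
    (∀ z : ℂ, z ≠ 0 →
      Q.eval z = μ * z ^ (2*n) * (starRingEnd ℂ) (Q.eval ((starRingEnd ℂ) z)⁻¹)) →
    ∃ c : ℂ, c ≠ 0 ∧ ∃ a : Fin n → ℂ, (∀ i, ‖a i‖ < 1) ∧
      ∀ u : ℂ, ‖u‖ = 1 → Q.eval u
        = c * u ^ n * ∏ i, ((u - a i) * (starRingEnd ℂ) (u - a i)) := by
  intro n
  induction n with
  | zero =>
    intro Q μ hμ hd hcirc hsym
    have hQ : Q = C (Q.coeff 0) := Polynomial.eq_C_of_natDegree_le_zero hd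
    refine ⟨Q.coeff 0, ?_, fun i => 0, fun i => i.elim0, ?_⟩
    · intro h
      apply hcirc 1 (by norm_num)
      rw [hQ, h]; simp
    · intro u hu
      rw [hQ]; simp
  | succ n ih =>
    intro Q μ hμ hd hcirc hsym
    have hQne : Q ≠ 0 := by
      intro h
      exact hcirc 1 (by norm_num) (by rw [h]; simp)
    by_cases hz0 : Q.eval 0 = 0
    · -- root at zero
      obtain ⟨Q₁, hQ1⟩ : X ∣ Q := X_dvd_iff.mpr (by rwa [coeff_zero_eq_eval_zero])
      have hQ1ne : Q₁ ≠ 0 := by rintro rfl; simp at hQ1; exact hQne hQ1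
      have hdeg1 : Q₁.natDegree ≤ 2*n+1 := by
        have := natDegree_mul (p := X) (q := Q₁) X_ne_zero hQ1ne
        rw [hQ1] at hd
        rw [this, natDegree_X] at hd
        omega
      have hsym1 : ∀ z : ℂ, z ≠ 0 →
          Q₁.eval z = μ * z ^ (2*n) * (starRingEnd ℂ) (Q₁.eval ((starRingEnd ℂ) z)⁻¹) := by
        intro z hz
        have h := hsym z hz
        rw [hQ1] at h
        have hzc : (starRingEnd ℂ) z ≠ 0 := by simpa using hz
        simp only [eval_mul, eval_X, map_mul, map_inv₀, Complex.conj_conj] at h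
        apply mul_left_cancel₀ hz
        rw [h]
        have hpow : z ^ (2*(n+1)) = z * z * z ^ (2*n) := by ring
        rw [hpow]
        field_simp
      have hdeg1' : Q₁.natDegree ≤ 2*n := degree_drop n μ hμ Q₁ hdeg1 hsym1
      have hcirc1 : ∀ u : ℂ, ‖u‖ = 1 → Q₁.eval u ≠ 0 := by
        intro u hu h
        apply hcirc u hu
        rw [hQ1, eval_mul, h, mul_zero]
      obtain ⟨c, hc, a, ha, heval⟩ := ih Q₁ μ hμ hdeg1' hcirc1 hsym1
      refine ⟨c, hc, Fin.snoc a 0, ?_, ?_⟩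
      · intro i
        induction i using Fin.lastCases with
        | last => simp
        | cast j => simp only [Fin.snoc_castSucc]; exact ha j
      · intro u hu
        have huu : u * (starRingEnd ℂ) u = 1 := by
          rw [Complex.mul_conj]
          norm_cast
          rw [Complex.normSq_eq_norm_sq]
          rw [hu]; norm_num
        rw [hQ1, eval_mul, eval_X, heval u hu, Fin.prod_univ_castSucc]
        simp only [Fin.snoc_castSucc, Fin.snoc_last, sub_zero]
        rw [huu]
        ring
    · -- no root at zero
      -- Q has positive degree
      have hdegpos : Q.natDegree ≠ 0 := by
        intro h0
        have hQC : Q = C (Q.coeff 0) := Polynomial.eq_C_of_natDegree_le_zero h0.le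
        have hc0 : Q.coeff 0 ≠ 0 := by
          intro h; apply hz0; rw [hQC, h]; simp
        have h1 := hsym 1 one_ne_zero
        have h2 := hsym 2 two_ne_zero
        rw [hQC] at h1 h2
        simp only [eval_C, map_one, one_pow, mul_one] at h1 h2
        have h3 : Q.coeff 0 = 2^(2*(n+1)) * Q.coeff 0 := by
          calc Q.coeff 0 = μ * 2 ^ (2*(n+1)) * (starRingEnd ℂ) (Q.coeff 0) := h2
          _ = 2 ^ (2*(n+1)) * (μ * (starRingEnd ℂ) (Q.coeff 0)) := by ring
          _ = 2 ^ (2*(n+1)) * Q.coeff 0 := by rw [← h1]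
        have h4 : ((2:ℂ) ^ (2*(n+1)) - 1) * Q.coeff 0 = 0 := by
          linear_combination -h3
        rcases mul_eq_zero.mp h4 with h | h
        · have : ((2:ℂ) ^ (2*(n+1))) = 1 := by linear_combination h
          have hnorm : ‖((2:ℂ) ^ (2*(n+1)))‖ = 1 := by rw [this]; norm_num
          rw [norm_pow, Complex.norm_ofNat] at hnorm
          have : (2:ℝ) ^ (2*(n+1)) ≥ 2 ^ 1 := by
            apply pow_le_pow_right₀ (by norm_num); omega
          norm_num at this
          rw [hnorm] at this
          norm_num at this
        · exact hc0 h
      obtain ⟨a0, ha0root'⟩ := Complex.exists_root (f := Q)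
        (by rwa [← Polynomial.natDegree_pos_iff_degree_pos, Nat.pos_iff_ne_zero])
      have ha0root : Q.eval a0 = 0 := ha0root'
      have hroot_refl : ∀ w : ℂ, Q.eval w = 0 → Q.eval ((starRingEnd ℂ) w)⁻¹ = 0 := by
        intro w hw
        have hwne : w ≠ 0 := by rintro rfl; rw [hw] at hz0; exact hz0 rfl
        have hwc : (starRingEnd ℂ) w ≠ 0 := by simpa using hwne
        have h := hsym ((starRingEnd ℂ) w)⁻¹ (inv_ne_zero hwc)
        rw [h]
        simp [hw]
      have hroot_ne0 : ∀ w : ℂ, Q.eval w = 0 → w ≠ 0 := by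
        intro w hw; rintro rfl; rw [hw] at hz0; exact hz0 rfl
      set α : ℂ := if ‖a0‖ < 1 then a0 else ((starRingEnd ℂ) a0)⁻¹ with hαdef
      have hαroot : Q.eval α = 0 := by
        rw [hαdef]; split
        · exact ha0root
        · exact hroot_refl a0 ha0root
      have hαlt : ‖α‖ < 1 := by
        rw [hαdef]; split
        · assumption
        · rename_i h
          have h1 : ‖a0‖ ≠ 1 := fun he => hcirc a0 he ha0root
          have h2 : 1 < ‖a0‖ := lt_of_le_of_ne (not_lt.mp h) (Ne.symm h1)
          rw [norm_inv, RCLike.norm_conj]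
          rw [inv_lt_one_iff₀]
          right; exact h2
      have hαne : α ≠ 0 := hroot_ne0 α hαroot
      have hαcne : (starRingEnd ℂ) α ≠ 0 := by simpa using hαne
      set β : ℂ := ((starRingEnd ℂ) α)⁻¹ with hβdef
      have hβroot : Q.eval β = 0 := hroot_refl α hαroot
      have hβgt : 1 < ‖β‖ := by
        rw [hβdef, norm_inv, RCLike.norm_conj]
        rw [lt_inv_comm₀ (by norm_num) (norm_pos_iff.mpr hαne)]
        simpa using hαlt
      have hαβ : α ≠ β := by
        intro h; rw [h] at hαlt; exact absurd hαlt (not_lt.mpr hβgt.le)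
      -- divide
      have hdvd : (X - C α) * (X - C β) ∣ Q := by
        apply IsCoprime.mul_dvd
        · exact Polynomial.isCoprime_X_sub_C_of_isUnit_sub
            ((sub_ne_zero.mpr hαβ).isUnit)
        · exact Polynomial.dvd_iff_isRoot.mpr hαroot
        · exact Polynomial.dvd_iff_isRoot.mpr hβroot
      obtain ⟨Q₂, hQ2⟩ := hdvd
      have hQ2ne : Q₂ ≠ 0 := by rintro rfl; simp at hQ2; exact hQne hQ2
      have hfacne : (X - C α) * (X - C β) ≠ 0 := by
        apply mul_ne_zero <;> exact X_sub_C_ne_zero _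
      have hdeg2 : Q₂.natDegree ≤ 2*n := by
        have hm := natDegree_mul hfacne hQ2ne
        have h2 : ((X - C α) * (X - C β)).natDegree = 2 := by
          rw [natDegree_mul (X_sub_C_ne_zero _) (X_sub_C_ne_zero _),
            natDegree_X_sub_C, natDegree_X_sub_C]
        rw [hQ2, hm, h2] at hd
        omega
      have hcirc2 : ∀ u : ℂ, ‖u‖ = 1 → Q₂.eval u ≠ 0 := by
        intro u hu h
        apply hcirc u hu
        rw [hQ2, eval_mul, h, mul_zero]
      set μ₂ : ℂ := μ * (starRingEnd ℂ) α * α⁻¹ with hμ2def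
      have hμ2 : μ₂ ≠ 0 := by
        apply mul_ne_zero (mul_ne_zero hμ hαcne) (inv_ne_zero hαne)
      have hβc : (starRingEnd ℂ) β = α⁻¹ := by
        rw [hβdef, map_inv₀, Complex.conj_conj]
      have hsym2 : ∀ z : ℂ, z ≠ 0 →
          Q₂.eval z = μ₂ * z ^ (2*n) * (starRingEnd ℂ) (Q₂.eval ((starRingEnd ℂ) z)⁻¹) := by
        have key : Q₂ = refl' (2*n) μ₂ Q₂ := by
          apply Polynomial.eq_of_infinite_eval_eq
          apply Set.Infinite.mono (s := ({0, α, β}ᶜ : Set ℂ))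
          · intro z hz
            simp only [Set.mem_compl_iff, Set.mem_insert_iff, Set.mem_singleton_iff,
              not_or] at hz
            obtain ⟨hz0', hzα, hzβ⟩ := hz
            have hzc : (starRingEnd ℂ) z ≠ 0 := by simpa using hz0'
            simp only [Set.mem_setOf_eq]
            rw [refl'_eval _ _ _ hdeg2 hz0']
            -- from hsym
            have h := hsym z hz0'
            rw [hQ2] at h
            simp only [eval_mul, eval_sub, eval_X, eval_C, map_mul, map_sub, map_inv₀,
              Complex.conj_conj] at h ⊢
            have hfz : (z - α) * (z - β) ≠ 0 := by
              apply mul_ne_zero (sub_ne_zero.mpr hzα) (sub_ne_zero.mpr hzβ)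
            apply mul_left_cancel₀ hfz
            rw [h]
            rw [hβc, hβdef]
            have hpow : z ^ (2*(n+1)) = z^2 * z ^ (2*n) := by ring
            rw [hpow, hμ2def]
            field_simp
            ring
          · apply compl_finite_infinite
            apply Set.Finite.insert; apply Set.Finite.insert; exact Set.finite_singleton _
        intro z hz
        conv_lhs => rw [key]
        exact refl'_eval _ _ _ hdeg2 hz
      obtain ⟨c, hc, a, ha, heval⟩ := ih Q₂ μ₂ hμ2 hdeg2 hcirc2 hsym2
      refine ⟨-c * ((starRingEnd ℂ) α)⁻¹, ?_, Fin.snoc a α, ?_, ?_⟩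
      · exact mul_ne_zero (neg_ne_zero.mpr hc) (inv_ne_zero hαcne)
      · intro i
        induction i using Fin.lastCases with
        | last => simpa using hαlt
        | cast j => simp only [Fin.snoc_castSucc]; exact ha j
      · intro u hu
        have huu : u * (starRingEnd ℂ) u = 1 := by
          rw [Complex.mul_conj]
          norm_cast
          rw [Complex.normSq_eq_norm_sq, hu]; norm_num
        have huc : (starRingEnd ℂ) u = u⁻¹ := eq_inv_of_mul_eq_one_right huu
        have hune : u ≠ 0 := by
          intro h; rw [h] at hu; simp at hu
        rw [hQ2, eval_mul, heval u hu, Fin.prod_univ_castSucc]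
        simp only [Fin.snoc_castSucc, Fin.snoc_last, eval_mul, eval_sub, eval_X, eval_C]
        rw [map_sub, huc, hβdef]
        rw [pow_succ]
        field_simp
        ring

/-- Fejér–Riesz spectral factorization: a strictly positive symmetric Laurent
polynomial `P(e^{iω}) = p₀ + Σ_{k=1}^m p_k (e^{ikω} + e^{−ikω})` can be factored as
`P(e^{iω}) = |ℓ₀ + ℓ₁ e^{−iω} + ⋯ + ℓ_m e^{−imω}|²` where all roots of
`r(z) = ℓ₀ z^m + ⋯ + ℓ_m` lie in the open unit disk. -/
theorem stmt_0 (m : ℕ) (p : ℕ → ℝ) (P : ℝ → ℂ)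
    (hPdef : ∀ ω : ℝ, P ω =
      (p 0 : ℂ) + ∑ k ∈ Finset.Icc 1 m,
        (p k : ℂ) * (Complex.exp (Complex.I * k * ω) + Complex.exp (-(Complex.I * k * ω))))
    (hpos : ∀ ω : ℝ, 0 < (P ω).re) :
    ∃ ℓ : ℕ → ℂ,
      (∀ ω : ℝ, P ω =
        ((‖∑ k ∈ Finset.range (m + 1), ℓ k * Complex.exp (-(Complex.I * k * ω))‖ : ℝ) ^ 2 : ℝ)) ∧
      (∀ z : ℂ, (∑ k ∈ Finset.range (m + 1), ℓ k * z ^ (m - k)) = 0 → ‖z‖ < 1) := by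
  classical
  set Q : Polynomial ℂ :=
    C ((p 0 : ℂ)) * X ^ m
      + ∑ k ∈ Finset.Icc 1 m, C ((p k : ℂ)) * (X ^ (m + k) + X ^ (m - k)) with hQdef
  have heval : ∀ z : ℂ, z ≠ 0 → Q.eval z
      = z ^ m * ((p 0 : ℂ) + ∑ k ∈ Finset.Icc 1 m, (p k : ℂ) * (z ^ k + (z⁻¹) ^ k)) := by
    intro z hz
    rw [hQdef]
    simp only [eval_add, eval_mul, eval_pow, eval_C, eval_X, eval_finset_sum]
    rw [mul_add, Finset.mul_sum]
    congr 1
    · ring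
    apply Finset.sum_congr rfl
    intro k hk
    have hkm : k ≤ m := (Finset.mem_Icc.mp hk).2
    rw [pow_add, pow_sub₀ z hz hkm]
    ring
  have hdeg : Q.natDegree ≤ 2 * m := by
    apply le_trans (natDegree_add_le _ _)
    rw [max_le_iff]
    constructor
    · exact le_trans (natDegree_C_mul_X_pow_le _ _) (by omega)
    · apply le_trans (natDegree_sum_le _ _)
      rw [Finset.fold_max_le]
      refine ⟨by omega, ?_⟩
      intro k hk
      have hkm : k ≤ m := (Finset.mem_Icc.mp hk).2
      simp only [Function.comp_apply]
      apply le_trans (natDegree_mul_le)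
      apply le_trans (add_le_add (natDegree_C _).le (natDegree_add_le _ _))
      rw [natDegree_X_pow, natDegree_X_pow]
      omega
  have hP' : ∀ ω : ℝ, P ω = (p 0 : ℂ) + ∑ k ∈ Finset.Icc 1 m,
      (p k : ℂ) * ((Complex.exp (Complex.I * ω)) ^ k + ((Complex.exp (Complex.I * ω))⁻¹) ^ k) := by
    intro ω
    rw [hPdef ω]
    congr 1
    apply Finset.sum_congr rfl
    intro k _
    have h1 : Complex.I * (k : ℂ) * (ω : ℂ) = (k : ℂ) * (Complex.I * ω) := by ring
    rw [h1, Complex.exp_neg, Complex.exp_nat_mul, ← inv_pow]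
  have hQP : ∀ ω : ℝ, Q.eval (Complex.exp (Complex.I * ω))
      = (Complex.exp (Complex.I * ω)) ^ m * P ω := by
    intro ω
    rw [heval _ (Complex.exp_ne_zero _), hP' ω]
  have hPne : ∀ ω : ℝ, P ω ≠ 0 := by
    intro ω h
    have := hpos ω
    rw [h] at this
    simp at this
  have hcirc : ∀ u : ℂ, ‖u‖ = 1 → Q.eval u ≠ 0 := by
    intro u hu
    obtain ⟨θ, hθ⟩ := (Complex.norm_eq_one_iff u).mp hu
    have hθ' : u = Complex.exp (Complex.I * θ) := by rw [← hθ]; congr 1; ring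
    rw [hθ', hQP θ]
    exact mul_ne_zero (pow_ne_zero _ (Complex.exp_ne_zero _)) (hPne θ)
  have hsym : ∀ z : ℂ, z ≠ 0 →
      Q.eval z = 1 * z ^ (2*m) * (starRingEnd ℂ) (Q.eval ((starRingEnd ℂ) z)⁻¹) := by
    intro z hz
    have hzc : (starRingEnd ℂ) z ≠ 0 := by simpa using hz
    rw [heval z hz, heval _ (inv_ne_zero hzc), inv_inv]
    simp only [map_mul, map_pow, map_inv₀, map_add, map_sum, Complex.conj_conj,
      Complex.conj_ofReal]
    have hswap : ∑ k ∈ Finset.Icc 1 m, (p k : ℂ) * ((z⁻¹) ^ k + z ^ k)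
        = ∑ k ∈ Finset.Icc 1 m, (p k : ℂ) * (z ^ k + (z⁻¹) ^ k) := by
      apply Finset.sum_congr rfl; intro k _; ring
    rw [hswap]
    rw [two_mul, pow_add, one_mul, inv_pow]
    field_simp
  obtain ⟨c, hc, a, ha, hprod⟩ := fejer_riesz_aux m Q 1 one_ne_zero hdeg hcirc hsym
  have hprod_cast : ∀ w : ℂ, ∏ i, ((w - a i) * (starRingEnd ℂ) (w - a i))
      = ((∏ i, Complex.normSq (w - a i) : ℝ) : ℂ) := by
    intro w
    push_cast
    apply Finset.prod_congr rfl
    intro i _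
    rw [Complex.mul_conj]
  have hPω : ∀ ω : ℝ, P ω = c * ((∏ i, Complex.normSq (Complex.exp (Complex.I * ω) - a i) : ℝ) : ℂ) := by
    intro ω
    have hu : ‖Complex.exp (Complex.I * ω)‖ = 1 := by
      rw [show Complex.I * (ω:ℂ) = (ω:ℂ) * Complex.I by ring]
      exact Complex.norm_exp_ofReal_mul_I ω
    have h := hQP ω
    rw [hprod _ hu, hprod_cast] at h
    exact (mul_left_cancel₀ (pow_ne_zero m (Complex.exp_ne_zero _)) (by rw [← h]; ring)).symm
  -- positivity of c
  have hane : ∀ (w : ℂ) (i : Fin m), ‖w‖ = 1 → w - a i ≠ 0 := by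
    intro w i hw h
    rw [sub_eq_zero] at h
    have hai := ha i
    rw [← h] at hai
    exact absurd hw (ne_of_lt hai)
  have htpos : ∀ ω : ℝ, 0 < ∏ i, Complex.normSq (Complex.exp (Complex.I * ω) - a i) := by
    intro ω
    apply Finset.prod_pos
    intro i _
    apply Complex.normSq_pos.mpr
    apply hane
    rw [show Complex.I * (ω:ℂ) = (ω:ℂ) * Complex.I by ring]
    exact Complex.norm_exp_ofReal_mul_I ω
  have hcim : c.im = 0 := by
    have h := hPω 0
    have h2 : (P 0).im = 0 := by
      have he : Complex.exp (Complex.I * ((0:ℝ):ℂ)) = 1 := by simp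
      rw [hP' 0, he]
      simp
    rw [h] at h2
    set t := ∏ i, Complex.normSq (Complex.exp (Complex.I * ((0:ℝ):ℂ)) - a i) with htdef
    rw [Complex.mul_im] at h2
    simp only [Complex.ofReal_re, Complex.ofReal_im, mul_zero, zero_add] at h2
    rcases mul_eq_zero.mp h2 with h | h
    · exact h
    · exact absurd h (ne_of_gt (htpos 0))
  have hcre : 0 < c.re := by
    have h := hpos 0
    rw [hPω 0] at h
    rw [Complex.mul_re] at h
    simp only [Complex.ofReal_re, Complex.ofReal_im, mul_zero, sub_zero] at h
    nlinarith [htpos 0]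
  have hc_real : c = ((c.re : ℝ) : ℂ) := Complex.ext rfl (by simpa using hcim)
  -- the factor polynomial
  set γ : ℝ := Real.sqrt c.re with hγdef
  have hγpos : 0 < γ := Real.sqrt_pos.mpr hcre
  have hγsq : γ ^ 2 = c.re := Real.sq_sqrt hcre.le
  set L : Polynomial ℂ := ∏ i : Fin m, (X - C (a i)) with hLdef
  have hLdeg : L.natDegree = m := by
    rw [hLdef, natDegree_prod_of_monic _ _ (fun i _ => monic_X_sub_C _)]
    simp [natDegree_X_sub_C]
  have hLsum : ∀ z : ℂ, ∑ k ∈ Finset.range (m+1), L.coeff (m - k) * z^(m-k) = L.eval z := by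
    intro z
    rw [L.eval_eq_sum_range' (by omega : L.natDegree < m + 1)]
    rw [← Finset.sum_range_reflect (fun j => L.coeff j * z ^ j) (m+1)]
    apply Finset.sum_congr rfl
    intro k hk
    have h1 : m + 1 - 1 - k = m - k := by omega
    simp only [h1]
  have hLeval : ∀ z : ℂ, L.eval z = ∏ i, (z - a i) := by
    intro z
    rw [hLdef, eval_prod]
    simp
  refine ⟨fun k => (γ : ℂ) * L.coeff (m - k), ?_, ?_⟩
  · intro ω
    set u := Complex.exp (Complex.I * ω) with hudef
    have hu1 : ‖u‖ = 1 := by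
      rw [hudef, show Complex.I * (ω:ℂ) = (ω:ℂ) * Complex.I by ring]
      exact Complex.norm_exp_ofReal_mul_I ω
    have hune : u ≠ 0 := Complex.exp_ne_zero _
    have hsumℓ : ∑ k ∈ Finset.range (m+1), (γ : ℂ) * L.coeff (m - k)
          * Complex.exp (-(Complex.I * k * ω))
        = (γ : ℂ) * (u⁻¹)^m * L.eval u := by
      rw [← hLsum u, Finset.mul_sum]
      apply Finset.sum_congr rfl
      intro k hk
      have hkm : k ≤ m := Nat.lt_succ_iff.mp (Finset.mem_range.mp hk)
      have hexp : Complex.exp (-(Complex.I * k * ω)) = (u⁻¹)^k := by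
        rw [show Complex.I * (k : ℂ) * (ω : ℂ) = (k : ℂ) * (Complex.I * ω) by ring,
          Complex.exp_neg, Complex.exp_nat_mul, ← inv_pow, hudef]
      rw [hexp]
      have hpow : (u⁻¹)^m * u^(m-k) = (u⁻¹)^k := by
        rw [pow_sub₀ u hune hkm]
        field_simp
        rw [one_div, inv_pow, inv_pow, inv_mul_cancel₀ (pow_ne_zero _ hune),
          mul_inv_cancel₀ (pow_ne_zero _ hune)]
      rw [← hpow]
      ring
    rw [hsumℓ]
    have hnorm : ‖(γ:ℂ) * (u⁻¹)^m * L.eval u‖^2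
        = c.re * ∏ i, Complex.normSq (u - a i) := by
      rw [norm_mul, norm_mul, norm_pow, norm_inv, hu1, hLeval]
      rw [norm_prod]
      rw [Complex.norm_real, Real.norm_eq_abs, abs_of_pos hγpos]
      rw [mul_pow, mul_pow, ← Finset.prod_pow]
      rw [← hγsq]
      congr 1
      · norm_num
      apply Finset.prod_congr rfl
      intro i _
      rw [Complex.normSq_eq_norm_sq]
    rw [hPω ω, hc_real]
    rw [← hudef, hnorm]
    norm_cast
  · intro z hz
    have hsum : ∑ k ∈ Finset.range (m+1), (γ : ℂ) * L.coeff (m - k) * z^(m-k)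
        = (γ:ℂ) * L.eval z := by
      rw [← hLsum z, Finset.mul_sum]
      apply Finset.sum_congr rfl
      intro k _
      ring
    rw [hsum] at hz
    rcases mul_eq_zero.mp hz with h | h
    · exact absurd h (by simpa using ne_of_gt hγpos)
    · rw [hLeval] at h
      obtain ⟨i, _, hi⟩ := Finset.prod_eq_zero_iff.mp h
      rw [sub_eq_zero] at hi
      rw [hi]
      exact ha i
end

section
/- Let m ∈ ℕ and let p : ℝ → ℝ be a real trigonometric polynomial of degree at most m, i.e., p(ω) = Σ_{k=−m}^{m} c_k e^{ikω} with complex coefficients satisfying c_{−k} = conj(c_k). Then p(ω) ≥ 0 for every ω ∈ ℝ if and only if there exists a Hermitian positive semidefinite matrix M ∈ ℂ^{(m+1)×(m+1)} such that p(ω) = v(ω)* M v(ω) for all ω ∈ ℝ, where v(ω) = (1, e^{iω}, e^{2iω}, …, e^{imω})ᵀ ∈ ℂ^{m+1}. -/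
open Complex Finset
open scoped Matrix ComplexOrder

noncomputable section FRAux
open Polynomial

/-- A polynomial vanishing on the unit circle is zero. -/
lemma FR.circle_zero (f : Polynomial ℂ) (h : ∀ ω : ℝ, f.eval (Complex.exp (Complex.I * ω)) = 0) :
    f = 0 := by
  apply f.eq_zero_of_infinite_isRoot
  have hinj : Set.InjOn (fun ω : ℝ => Complex.exp (Complex.I * ω)) (Set.Ioo 0 1) := by
    intro x hx y hy hxy
    simp only [Complex.exp_eq_exp_iff_exists_int] at hxy
    obtain ⟨n, hn⟩ := hxy
    have him := congrArg Complex.im hn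
    simp [Complex.add_im, Complex.mul_im] at him
    -- him : x = y + n * (2π)  (roughly)
    have hn0 : n = 0 := by
      by_contra hne
      have h1 : (1:ℝ) ≤ |(n:ℝ)| := by exact_mod_cast Int.one_le_abs hne
      have hpi : (2:ℝ) ≤ 2 * Real.pi := by nlinarith [Real.pi_gt_three]
      have : |x - y| < 1 := abs_sub_lt_iff.mpr ⟨by linarith [hx.2, hy.1], by linarith [hy.2, hx.1]⟩
      rcases abs_cases (n:ℝ) with ⟨he, _⟩ | ⟨he, _⟩ <;> rcases abs_cases (x - y) with ⟨he2, _⟩ | ⟨he2, _⟩ <;>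
        nlinarith
    rw [hn0] at him
    simpa using him
  have := (Set.Ioo_infinite (by norm_num : (0:ℝ) < 1)).image hinj
  apply this.mono
  rintro z ⟨ω, _, rfl⟩
  exact h ω



lemma FR.conj_eval (q : Polynomial ℂ) (z : ℂ) :
    starRingEnd ℂ (q.eval z) = (q.map (starRingEnd ℂ)).eval (starRingEnd ℂ z) := by
  rw [Polynomial.eval_map, Polynomial.eval₂_at_apply]

lemma FR.eval_reflect (f : Polynomial ℂ) (N : ℕ) (hf : f.natDegree ≤ N) (z : ℂ) (hz : z ≠ 0) :
    (Polynomial.reflect N f).eval z = z ^ N * f.eval z⁻¹ := by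
  have hzi : z⁻¹ ≠ 0 := inv_ne_zero hz
  have : Invertible (z⁻¹) := invertibleOfNonzero hzi
  have h := Polynomial.eval₂_reflect_mul_pow (RingHom.id ℂ) z⁻¹ N f hf
  rw [invOf_eq_inv, inv_inv] at h
  have h' : (Polynomial.reflect N f).eval z * (z⁻¹) ^ N = f.eval z⁻¹ := h
  have hzn : (z⁻¹) ^ N ≠ 0 := pow_ne_zero _ hzi
  have hzz : z ^ N * (z⁻¹) ^ N = 1 := by rw [← mul_pow, mul_inv_cancel₀ hz, one_pow]
  linear_combination z ^ N * h' - (Polynomial.reflect N f).eval z * hzz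



/-- If `e^{-inω} q(e^{iω}) ≥ 0` for all `ω` and `q(e^{iθ}) = 0`, then also `q'(e^{iθ}) = 0`. -/
lemma FR.deriv_root (q : Polynomial ℂ) (n : ℕ) (θ : ℝ)
    (H : ∀ ω : ℝ, 0 ≤ Complex.exp (-(Complex.I * n * ω)) * q.eval (Complex.exp (Complex.I * ω)))
    (hroot : q.eval (Complex.exp (Complex.I * θ)) = 0) :
    q.derivative.eval (Complex.exp (Complex.I * θ)) = 0 := by
  set ζ := Complex.exp (Complex.I * θ) with hζ
  set g : ℝ → ℂ := fun ω => Complex.exp (-(Complex.I * n * ω)) * q.eval (Complex.exp (Complex.I * ω)) with hg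
  -- derivative of ω ↦ exp (a * ω) for complex a
  have hexp : ∀ a : ℂ, HasDerivAt (fun ω : ℝ => Complex.exp (a * ω)) (Complex.exp (a * θ) * a) θ := by
    intro a
    have h1 : HasDerivAt (fun ω : ℝ => a * (ω : ℂ)) a θ := by
      simpa using (Complex.ofRealCLM.hasDerivAt (x := θ)).const_mul a
    simpa using h1.cexp
  have h2 : HasDerivAt (fun ω : ℝ => q.eval (Complex.exp (Complex.I * ω)))
      (q.derivative.eval ζ * (ζ * Complex.I)) θ := by
    have := (Polynomial.hasDerivAt q ζ).comp θ (hexp Complex.I)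
    simpa [hζ, mul_comm, Function.comp_def] using this
  have h3 : HasDerivAt (fun ω : ℝ => Complex.exp (-(Complex.I * n * ω)))
      (Complex.exp (-(Complex.I * n * θ)) * (-(Complex.I * n))) θ := by
    have := hexp (-(Complex.I * n))
    simpa [neg_mul, mul_assoc] using this
  have hgd : HasDerivAt g
      (Complex.exp (-(Complex.I * n * θ)) * (-(Complex.I * n)) * q.eval ζ
        + Complex.exp (-(Complex.I * n * θ)) * (q.derivative.eval ζ * (ζ * Complex.I))) θ :=
    h3.mul h2
  set gd := Complex.exp (-(Complex.I * n * θ)) * (-(Complex.I * n)) * q.eval ζ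
        + Complex.exp (-(Complex.I * n * θ)) * (q.derivative.eval ζ * (ζ * Complex.I)) with hgddef
  -- real part has a local min at θ
  have hGmin : IsLocalMin (fun ω => (g ω).re) θ := by
    apply Filter.Eventually.of_forall
    intro ω
    have h0 : (g θ).re = 0 := by simp only [hg]; rw [← hζ, hroot]; simp
    show (g θ).re ≤ (g ω).re
    rw [h0]
    exact (Complex.nonneg_iff.mp (H ω)).1
  have hGre : HasDerivAt (fun ω => (g ω).re) gd.re θ :=
    (Complex.reCLM.hasFDerivAt.comp_hasDerivAt θ hgd)
  have hre0 : gd.re = 0 := hGmin.hasDerivAt_eq_zero hGre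
  have hGim : HasDerivAt (fun ω => (g ω).im) gd.im θ :=
    (Complex.imCLM.hasFDerivAt.comp_hasDerivAt θ hgd)
  have him0 : gd.im = 0 := by
    have hzero : (fun ω => (g ω).im) = fun _ => (0:ℝ) := by
      funext ω
      exact ((Complex.nonneg_iff.mp (H ω)).2).symm
    rw [hzero] at hGim
    exact hGim.unique (hasDerivAt_const θ 0)
  have hgd0 : gd = 0 := Complex.ext hre0 him0
  rw [hgddef, hroot] at hgd0
  have hne1 : Complex.exp (-(Complex.I * n * θ)) ≠ 0 := Complex.exp_ne_zero _
  have hne2 : ζ ≠ 0 := Complex.exp_ne_zero _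
  simpa [hroot, Complex.exp_ne_zero, Complex.I_ne_zero, hne2, mul_eq_zero] using hgd0


lemma FR.dense_ne (ζ : ℂ) : Dense {ω : ℝ | Complex.exp (Complex.I * ω) ≠ ζ} := by
  rw [Metric.dense_iff]
  intro x ε hε
  set t₁ := min (ε/2) 1 with ht₁
  have ht₁pos : 0 < t₁ := lt_min (by linarith) one_pos
  by_cases h1 : Complex.exp (Complex.I * (x + t₁)) ≠ ζ
  · refine ⟨x + t₁, ?_, by simp only [Set.mem_setOf_eq]; push_cast; exact h1⟩
    simp only [Metric.mem_ball, Real.dist_eq]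
    rw [abs_of_pos (by linarith)]
    have : t₁ ≤ ε/2 := min_le_left _ _
    linarith
  · push_neg at h1
    refine ⟨x + t₁/2, ?_, ?_⟩
    · simp only [Metric.mem_ball, Real.dist_eq]
      rw [abs_of_pos (by linarith)]
      have : t₁ ≤ ε/2 := min_le_left _ _
      linarith
    · simp only [Set.mem_setOf_eq]
      intro h2
      push_cast at h2
      rw [← h1] at h2
      rw [Complex.exp_eq_exp_iff_exists_int] at h2
      obtain ⟨k, hk⟩ := h2
      have him := congrArg Complex.im hk
      push_cast at him
      simp [Complex.add_im, Complex.mul_im] at him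
      -- him : x + t₁/2 = x + t₁ + k * (2π)
      have hk' : (k : ℝ) * (2 * Real.pi) = -(t₁/2) := by linarith
      have hpi : (2:ℝ) ≤ 2 * Real.pi := by nlinarith [Real.pi_gt_three]
      have ht₁le : t₁ ≤ 1 := min_le_right _ _
      rcases eq_or_ne k 0 with rfl | hkne
      · simp at hk'; linarith
      · have : (1:ℝ) ≤ |(k:ℝ)| := by exact_mod_cast Int.one_le_abs hkne
        rcases abs_cases (k:ℝ) with ⟨he, _⟩ | ⟨he, _⟩ <;> nlinarith

lemma FR.nonneg_of_dense {h : ℝ → ℂ} (hc : Continuous h) {D : Set ℝ} (hD : Dense D)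
    (hpos : ∀ ω ∈ D, 0 ≤ h ω) : ∀ ω : ℝ, 0 ≤ h ω := by
  have hclosed : IsClosed {ω : ℝ | 0 ≤ h ω} := by
    have : {ω : ℝ | 0 ≤ h ω} =
        (fun ω => (h ω).re) ⁻¹' Set.Ici 0 ∩ (fun ω => (h ω).im) ⁻¹' {0} := by
      ext ω
      simp [Complex.nonneg_iff, eq_comm]
    rw [this]
    exact ((isClosed_Ici.preimage (Complex.continuous_re.comp hc)).inter
      (isClosed_singleton.preimage (Complex.continuous_im.comp hc)))
  intro ω
  have : Set.univ ⊆ {ω : ℝ | 0 ≤ h ω} := by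
    rw [← hclosed.closure_eq]
    intro x _
    exact closure_mono (fun y hy => hpos y hy) (hD x)
  exact this (Set.mem_univ ω)



lemma FR.exp_split (a b : ℂ) : Complex.exp (a + b) = Complex.exp a * Complex.exp b := Complex.exp_add a b

lemma FR.main (n : ℕ) : ∀ q : Polynomial ℂ, q.natDegree ≤ 2*n →
    (∀ ω : ℝ, 0 ≤ Complex.exp (-(Complex.I * n * ω)) * q.eval (Complex.exp (Complex.I * ω))) →
    ∃ r : Polynomial ℂ, r.natDegree ≤ n ∧ ∀ ω : ℝ,
      Complex.exp (-(Complex.I * n * ω)) * q.eval (Complex.exp (Complex.I * ω)) =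
        starRingEnd ℂ (r.eval (Complex.exp (Complex.I * ω))) * r.eval (Complex.exp (Complex.I * ω)) := by
  induction n with
  | zero =>
    intro q hdeg H
    have hqC : q = Polynomial.C (q.coeff 0) := Polynomial.eq_C_of_natDegree_le_zero (by simpa using hdeg)
    have h0 := H 0
    rw [hqC] at h0
    simp at h0
    -- h0 : 0 ≤ q.coeff 0
    have hre : 0 ≤ (q.coeff 0).re := (Complex.nonneg_iff.mp h0).1
    have him : (q.coeff 0).im = 0 := ((Complex.nonneg_iff.mp h0).2).symm
    refine ⟨Polynomial.C ((Real.sqrt (q.coeff 0).re : ℝ) : ℂ), by simp, fun ω => ?_⟩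
    rw [hqC]
    simp [Complex.conj_ofReal, ← Complex.ofReal_mul, Real.mul_self_sqrt hre]
    exact (Complex.ext (by simp) (by simp [him])).symm
  | succ n IH =>
    intro q hdeg H
    by_cases hq0 : q = 0
    · exact ⟨0, by simp, fun ω => by simp [hq0]⟩
    set N := 2*n+2 with hN
    have hdeg' : q.natDegree ≤ N := by omega
    have hmdeg : (q.map (starRingEnd ℂ)).natDegree ≤ N := by
      rw [Polynomial.natDegree_map]; exact hdeg'
    -- the reflection identity
    have hqrefl : q = Polynomial.reflect N (q.map (starRingEnd ℂ)) := by
      have hcirc : ∀ ω : ℝ, (Polynomial.reflect N (q.map (starRingEnd ℂ))).eval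
          (Complex.exp (Complex.I * ω)) = q.eval (Complex.exp (Complex.I * ω)) := by
        intro ω
        set z := Complex.exp (Complex.I * ω) with hzdef
        have hz0 : z ≠ 0 := Complex.exp_ne_zero _
        have hconjz : starRingEnd ℂ z = z⁻¹ := by
          rw [hzdef, ← Complex.exp_conj, ← Complex.exp_neg]
          congr 1
          simp [Complex.conj_ofReal]
        rw [FR.eval_reflect _ _ hmdeg _ hz0]
        have hev : (q.map (starRingEnd ℂ)).eval z⁻¹ = starRingEnd ℂ (q.eval z) := by
          rw [FR.conj_eval, hconjz]
        rw [hev]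
        -- use realness from H
        set E := Complex.exp (-(Complex.I * ((n:ℕ)+1+1-1) * ω)) with hEdef
        have hH := H ω
        have hreal : starRingEnd ℂ (Complex.exp (-(Complex.I * (((n+1:ℕ)):ℂ) * ω)) * q.eval z)
            = Complex.exp (-(Complex.I * (((n+1:ℕ)):ℂ) * ω)) * q.eval z := by
          rw [Complex.conj_eq_iff_im]
          exact ((Complex.nonneg_iff.mp hH).2).symm
        set F := Complex.exp (Complex.I * (((n+1:ℕ)):ℂ) * ω) with hFdef
        have hE' : starRingEnd ℂ (Complex.exp (-(Complex.I * (((n+1:ℕ)):ℂ) * ω))) = F := by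
          rw [← Complex.exp_conj]
          congr 1
          push_cast
          simp [Complex.conj_ofReal]
        rw [map_mul, hE'] at hreal
        have hFE : F * Complex.exp (-(Complex.I * (((n+1:ℕ)):ℂ) * ω)) = 1 := by
          rw [hFdef, ← Complex.exp_add]
          ring_nf
          exact Complex.exp_zero
        have hz2 : z ^ N = F * F := by
          rw [hzdef, ← Complex.exp_nat_mul, hFdef, ← Complex.exp_add, hN]
          congr 1
          push_cast
          ring
        rw [hz2]
        calc F * F * starRingEnd ℂ (q.eval z)
            = F * (F * starRingEnd ℂ (q.eval z)) := by ring
          _ = F * (Complex.exp (-(Complex.I * (((n+1:ℕ)):ℂ) * ω)) * q.eval z) := by rw [hreal]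
          _ = (F * Complex.exp (-(Complex.I * (((n+1:ℕ)):ℂ) * ω))) * q.eval z := by ring
          _ = q.eval z := by rw [hFE]; ring
      have hdiff := FR.circle_zero (q - Polynomial.reflect N (q.map (starRingEnd ℂ)))
        (fun ω => by rw [Polynomial.eval_sub, hcirc ω, sub_self])
      exact sub_eq_zero.mp hdiff
    have hcoeff : ∀ k : ℕ, k ≤ N → q.coeff k = starRingEnd ℂ (q.coeff (N - k)) := by
      intro k hk
      conv_lhs => rw [hqrefl]
      rw [Polynomial.coeff_reflect, Polynomial.revAt_le hk, Polynomial.coeff_map]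
    by_cases hA : q.coeff N = 0
    · -- leading coefficient vanishes: strip a factor of X
      have hc0 : q.coeff 0 = 0 := by
        have := hcoeff 0 (Nat.zero_le N)
        simpa [hA] using this
      obtain ⟨q₁, hq₁⟩ := Polynomial.X_dvd_iff.mpr hc0
      have hq₁ne : q₁ ≠ 0 := fun h => hq0 (by rw [hq₁, h, mul_zero])
      have hdq : q.natDegree ≤ 2*n+1 := by
        by_contra hcon
        have h1 : q.natDegree = N := by omega
        have := Polynomial.leadingCoeff_ne_zero.mpr hq0
        rw [Polynomial.leadingCoeff, h1] at this
        exact this hA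
      have hdeg₁ : q₁.natDegree ≤ 2*n := by
        have := Polynomial.natDegree_mul (Polynomial.X_ne_zero (R := ℂ)) hq₁ne
        rw [← hq₁, Polynomial.natDegree_X] at this
        omega
      have H₁ : ∀ ω : ℝ, 0 ≤ Complex.exp (-(Complex.I * n * ω)) *
          q₁.eval (Complex.exp (Complex.I * ω)) := by
        intro ω
        have hH := H ω
        rw [hq₁, Polynomial.eval_mul, Polynomial.eval_X] at hH
        have hsp : Complex.exp (-(Complex.I * (((n+1:ℕ)):ℂ) * ω)) * Complex.exp (Complex.I * ω)
            = Complex.exp (-(Complex.I * n * ω)) := by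
          rw [← Complex.exp_add]
          congr 1
          push_cast
          ring
        calc (0:ℂ) ≤ Complex.exp (-(Complex.I * (((n+1:ℕ)):ℂ) * ω)) *
              (Complex.exp (Complex.I * ω) * q₁.eval (Complex.exp (Complex.I * ω))) := hH
          _ = Complex.exp (-(Complex.I * n * ω)) * q₁.eval (Complex.exp (Complex.I * ω)) := by
              rw [← hsp]; ring
      obtain ⟨r, hrdeg, hrval⟩ := IH q₁ hdeg₁ H₁
      refine ⟨r, hrdeg.trans (Nat.le_succ n), fun ω => ?_⟩
      have hsp : Complex.exp (-(Complex.I * (((n+1:ℕ)):ℂ) * ω)) * Complex.exp (Complex.I * ω)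
          = Complex.exp (-(Complex.I * n * ω)) := by
        rw [← Complex.exp_add]
        congr 1
        push_cast
        ring
      calc Complex.exp (-(Complex.I * (((n+1:ℕ)):ℂ) * ω)) * q.eval (Complex.exp (Complex.I * ω))
          = Complex.exp (-(Complex.I * n * ω)) * q₁.eval (Complex.exp (Complex.I * ω)) := by
            rw [hq₁, Polynomial.eval_mul, Polynomial.eval_X, ← hsp]; ring
        _ = _ := hrval ω
    · -- leading coefficient nonzero: extract a conjugate pair of roots
      have hdeg_eq : q.natDegree = N := le_antisymm hdeg' (Polynomial.le_natDegree_of_ne_zero hA)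
      have hc0 : q.coeff 0 ≠ 0 := by
        have h00 := hcoeff 0 (Nat.zero_le N)
        simp only [Nat.sub_zero] at h00
        rw [h00]
        simpa using hA
      obtain ⟨ζ, hζroot⟩ := Complex.exists_root (f := q)
        (Polynomial.natDegree_pos_iff_degree_pos.mp (by omega))
      have hζ0 : ζ ≠ 0 := by
        rintro rfl
        rw [Polynomial.IsRoot, ← Polynomial.coeff_zero_eq_eval_zero] at hζroot
        exact hc0 hζroot
      have hw0 : starRingEnd ℂ ζ ≠ 0 := by simpa using hζ0
      set ζ' := (starRingEnd ℂ ζ)⁻¹ with hζ'def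
      have hζ'0 : ζ' ≠ 0 := inv_ne_zero hw0
      have hζ'root : q.IsRoot ζ' := by
        rw [Polynomial.IsRoot]
        conv_lhs => rw [hqrefl]
        rw [FR.eval_reflect _ _ hmdeg _ hζ'0, hζ'def, inv_inv, ← FR.conj_eval]
        rw [hζroot]
        simp
      -- factor out (X - ζ)(X - ζ')
      have hfac : ∃ q₁ : Polynomial ℂ, q = (Polynomial.X - Polynomial.C ζ) *
          ((Polynomial.X - Polynomial.C ζ') * q₁) := by
        rcases eq_or_ne ζ' ζ with heq | hne
        · -- ζ on the unit circle: use the derivative argument for a double root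
          have habs : ‖ζ‖ = 1 := by
            have h1 : ζ * starRingEnd ℂ ζ = 1 := by
              have : (starRingEnd ℂ ζ)⁻¹ = ζ := heq
              field_simp at this
              linear_combination -this
            have := congrArg (‖·‖) h1
            simp [map_mul] at this
            nlinarith [norm_nonneg ζ]
          set θ := ζ.arg with hθdef
          have hθ : Complex.exp (Complex.I * θ) = ζ := by
            have := Complex.norm_mul_exp_arg_mul_I ζ
            rw [habs] at this
            simpa [mul_comm] using this
          have hderiv : q.derivative.eval ζ = 0 := by
            have := FR.deriv_root q (n+1) θ (by
              intro ω
              have := H ω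
              push_cast at this ⊢
              convert this using 3) (by rw [hθ]; exact hζroot)
            rwa [hθ] at this
          obtain ⟨q₂, hq₂⟩ := (Polynomial.dvd_iff_isRoot).mpr hζroot
          have hq₂root : q₂.eval ζ = 0 := by
            have hd := congrArg Polynomial.derivative hq₂
            rw [Polynomial.derivative_mul, Polynomial.derivative_X_sub_C] at hd
            have := congrArg (Polynomial.eval ζ) hd
            simp at this
            rw [hderiv] at this
            simpa using this.symm
          obtain ⟨q₁, hq₁⟩ := (Polynomial.dvd_iff_isRoot).mpr (by exact hq₂root)
          exact ⟨q₁, by rw [hq₂, hq₁, heq]⟩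
        · obtain ⟨q₂, hq₂⟩ := (Polynomial.dvd_iff_isRoot).mpr hζroot
          have hq₂root : q₂.eval ζ' = 0 := by
            have := hζ'root
            rw [Polynomial.IsRoot, hq₂] at this
            simp at this
            rcases this with h | h
            · exact absurd (by linear_combination h : ζ' = ζ) hne
            · exact h
          obtain ⟨q₁, hq₁⟩ := (Polynomial.dvd_iff_isRoot).mpr (by exact hq₂root)
          exact ⟨q₁, by rw [hq₂, hq₁]⟩
      obtain ⟨q₁, hq₁⟩ := hfac
      have hq₁ne : q₁ ≠ 0 := by
        rintro rfl
        rw [mul_zero, mul_zero] at hq₁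
        exact hq0 hq₁
      have hdeg₁ : q₁.natDegree ≤ 2*n := by
        have h1 : ((Polynomial.X - Polynomial.C ζ') * q₁).natDegree
            = 1 + q₁.natDegree := by
          rw [Polynomial.natDegree_mul (Polynomial.X_sub_C_ne_zero ζ') hq₁ne,
            Polynomial.natDegree_X_sub_C]
        have h2 : q.natDegree = 1 + (1 + q₁.natDegree) := by
          rw [hq₁, Polynomial.natDegree_mul (Polynomial.X_sub_C_ne_zero ζ)
            (mul_ne_zero (Polynomial.X_sub_C_ne_zero ζ') hq₁ne),
            Polynomial.natDegree_X_sub_C, h1]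
        omega
      set q₂ := Polynomial.C (-(starRingEnd ℂ ζ)⁻¹) * q₁ with hq₂def
      have hdeg₂ : q₂.natDegree ≤ 2*n := (Polynomial.natDegree_C_mul_le _ _).trans hdeg₁
      -- the key pointwise identity
      have key : ∀ ω : ℝ, Complex.exp (-(Complex.I * (((n+1:ℕ)):ℂ) * ω)) *
          q.eval (Complex.exp (Complex.I * ω)) =
          ((Complex.normSq (Complex.exp (Complex.I * ω) - ζ) : ℝ) : ℂ) *
            (Complex.exp (-(Complex.I * n * ω)) * q₂.eval (Complex.exp (Complex.I * ω))) := by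
        intro ω
        set z := Complex.exp (Complex.I * ω) with hzdef
        set u := Complex.exp (-(Complex.I * ω)) with hudef
        have hzu : z * u = 1 := by
          rw [hzdef, hudef, ← Complex.exp_add]
          ring_nf
          exact Complex.exp_zero
        have hconjz : starRingEnd ℂ z = u := by
          rw [hzdef, hudef, ← Complex.exp_conj]
          congr 1
          simp [Complex.conj_ofReal]
        have hns : ((Complex.normSq (z - ζ) : ℝ) : ℂ) = (z - ζ) * (u - starRingEnd ℂ ζ) := by
          rw [← Complex.mul_conj, map_sub, hconjz]
        have hsp : Complex.exp (-(Complex.I * (((n+1:ℕ)):ℂ) * ω))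
            = Complex.exp (-(Complex.I * n * ω)) * u := by
          rw [hudef, ← Complex.exp_add]
          congr 1
          push_cast
          ring
        rw [hq₁, hq₂def, hns, hsp]
        simp only [Polynomial.eval_mul, Polynomial.eval_sub, Polynomial.eval_X,
          Polynomial.eval_C]
        set Q := q₁.eval z
        set E := Complex.exp (-(Complex.I * (n:ℂ) * ω))
        set w := starRingEnd ℂ ζ
        -- goal: E * u * ((z - ζ) * ((z - w⁻¹) * Q)) = (z-ζ)*(u-w) * (E * (-w⁻¹ * Q))
        have hww : w * w⁻¹ = 1 := mul_inv_cancel₀ hw0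
        linear_combination (E * Q * (z - ζ)) * hzu - (E * Q * (z - ζ)) * hww
      -- positivity for q₂ via density
      have H₂ : ∀ ω : ℝ, 0 ≤ Complex.exp (-(Complex.I * n * ω)) *
          q₂.eval (Complex.exp (Complex.I * ω)) := by
        have hcont : Continuous (fun ω : ℝ => Complex.exp (-(Complex.I * n * ω)) *
            q₂.eval (Complex.exp (Complex.I * ω))) := by
          have h1 : Continuous (fun ω : ℝ => Complex.I * (ω:ℂ)) :=
            continuous_const.mul Complex.continuous_ofReal
          have h2 : Continuous (fun ω : ℝ => -(Complex.I * (n:ℂ) * (ω:ℂ))) :=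
            (continuous_const.mul Complex.continuous_ofReal).neg
          exact (Complex.continuous_exp.comp h2).mul
            (q₂.continuous_aeval.comp (Complex.continuous_exp.comp h1))
        apply FR.nonneg_of_dense hcont (FR.dense_ne ζ)
        intro ω hω
        have hne : Complex.exp (Complex.I * ω) - ζ ≠ 0 := sub_ne_zero.mpr hω
        have hnspos : 0 < Complex.normSq (Complex.exp (Complex.I * ω) - ζ) := by
          rw [Complex.normSq_pos]; exact hne
        have hH := H ω
        rw [key ω] at hH
        have hinv : (0:ℂ) ≤ ((Complex.normSq (Complex.exp (Complex.I * ω) - ζ))⁻¹ : ℝ) :=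
          Complex.zero_le_real.mpr (inv_nonneg.mpr hnspos.le)
        have := mul_nonneg hinv hH
        calc (0:ℂ) ≤ ((Complex.normSq (Complex.exp (Complex.I * ω) - ζ))⁻¹ : ℝ) *
              (((Complex.normSq (Complex.exp (Complex.I * ω) - ζ) : ℝ) : ℂ) *
                (Complex.exp (-(Complex.I * n * ω)) * q₂.eval (Complex.exp (Complex.I * ω)))) :=
            this
          _ = Complex.exp (-(Complex.I * n * ω)) * q₂.eval (Complex.exp (Complex.I * ω)) := by
            rw [← mul_assoc, ← Complex.ofReal_mul, inv_mul_cancel₀ (ne_of_gt hnspos)]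
            simp
      obtain ⟨r₁, hr₁deg, hr₁val⟩ := IH q₂ hdeg₂ H₂
      refine ⟨(Polynomial.X - Polynomial.C ζ) * r₁, ?_, fun ω => ?_⟩
      · calc ((Polynomial.X - Polynomial.C ζ) * r₁).natDegree
            ≤ (Polynomial.X - Polynomial.C ζ).natDegree + r₁.natDegree :=
              Polynomial.natDegree_mul_le
          _ ≤ 1 + n := by rw [Polynomial.natDegree_X_sub_C]; omega
          _ = n + 1 := by omega
      · set z := Complex.exp (Complex.I * ω) with hzdef
        rw [key ω, hr₁val ω]
        simp only [Polynomial.eval_mul, Polynomial.eval_sub, Polynomial.eval_X,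
          Polynomial.eval_C, map_mul, map_sub]
        rw [← Complex.mul_conj, map_sub]
        ring


end FRAux

/-- Gram-matrix (trace) parameterization of nonnegative trigonometric polynomials:
a real trigonometric polynomial `p(ω) = Σ_{k=−m}^m c_k e^{ikω}` (with
`c_{−k} = conj (c_k)`) is nonnegative everywhere iff `p(ω) = v(ω)* M v(ω)` for a
Hermitian positive semidefinite matrix `M`, where `v(ω) = (1, e^{iω}, …, e^{imω})`. -/
theorem stmt_2 (m : ℕ) (c : ℤ → ℂ) (p : ℝ → ℝ)
    (hsym : ∀ k : ℤ, c (-k) = starRingEnd ℂ (c k))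
    (hpdef : ∀ ω : ℝ, (p ω : ℂ) =
      ∑ k ∈ Finset.Icc (-(m : ℤ)) (m : ℤ), c k * Complex.exp (Complex.I * k * ω)) :
    (∀ ω : ℝ, 0 ≤ p ω) ↔
      ∃ M : Matrix (Fin (m + 1)) (Fin (m + 1)) ℂ, M.PosSemidef ∧
        ∀ ω : ℝ, (p ω : ℂ) =
          star (fun k : Fin (m + 1) => Complex.exp (Complex.I * (k : ℕ) * ω)) ⬝ᵥ
            M.mulVec (fun k : Fin (m + 1) => Complex.exp (Complex.I * (k : ℕ) * ω)) := by
  constructor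
  · intro hp
    -- build the polynomial q
    set q : Polynomial ℂ := ∑ k ∈ Finset.range (2*m+1), Polynomial.C (c ((k:ℤ) - m)) * Polynomial.X ^ k with hqdef
    have hqdeg : q.natDegree ≤ 2*m := by
      apply (Polynomial.natDegree_sum_le _ _).trans
      rw [Finset.fold_max_le]
      refine ⟨Nat.zero_le _, fun k hk => ?_⟩
      simp only [Finset.mem_range] at hk
      exact (Polynomial.natDegree_C_mul_le _ _).trans
        (by simp only [Polynomial.natDegree_X_pow]; omega)
    have hsum : ∀ ω : ℝ, (p ω : ℂ) = ∑ k ∈ Finset.range (2*m+1),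
        c ((k:ℤ) - m) * Complex.exp (Complex.I * ((k:ℤ) - m) * ω) := by
      intro ω
      rw [hpdef ω]
      refine (Finset.sum_bij (fun (k : ℕ) (_ : k ∈ Finset.range (2*m+1)) => (k:ℤ) - m)
        ?_ ?_ ?_ ?_).symm
      · intro k hk
        simp only [Finset.mem_range] at hk
        simp only [Finset.mem_Icc]
        omega
      · intro k1 hk1 k2 hk2 h
        simpa using h
      · intro j hj
        simp only [Finset.mem_Icc] at hj
        refine ⟨(j + m).toNat, Finset.mem_range.mpr (by omega), by show (((j + m).toNat : ℤ)) - m = j; omega⟩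
      · intro k hk
        push_cast
        ring_nf
    have heval : ∀ ω : ℝ, Complex.exp (-(Complex.I * m * ω)) *
        q.eval (Complex.exp (Complex.I * ω)) = (p ω : ℂ) := by
      intro ω
      rw [hqdef]
      rw [Polynomial.eval_finset_sum]
      simp only [Polynomial.eval_mul, Polynomial.eval_C, Polynomial.eval_pow, Polynomial.eval_X]
      rw [Finset.mul_sum, hsum ω]
      apply Finset.sum_congr rfl
      intro k hk
      have hzk : Complex.exp (Complex.I * ω) ^ k = Complex.exp ((k:ℕ) * (Complex.I * ω)) :=
        (Complex.exp_nat_mul _ k).symm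
      rw [hzk, ← mul_assoc, mul_comm (Complex.exp (-(Complex.I * m * ω))) (c ((k:ℤ) - m)),
        mul_assoc, ← Complex.exp_add]
      congr 2
      push_cast
      ring
    have H : ∀ ω : ℝ, 0 ≤ Complex.exp (-(Complex.I * m * ω)) *
        q.eval (Complex.exp (Complex.I * ω)) := by
      intro ω
      rw [heval ω]
      exact Complex.zero_le_real.mpr (hp ω)
    obtain ⟨r, hrdeg, hrval⟩ := FR.main m q hqdeg H
    set a : Fin (m+1) → ℂ := fun k => r.coeff k with hadef
    have hs : ∀ ω : ℝ, r.eval (Complex.exp (Complex.I * ω)) =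
        ∑ k : Fin (m+1), a k * Complex.exp (Complex.I * (k:ℕ) * ω) := by
      intro ω
      rw [Polynomial.eval_eq_sum_range' (Nat.lt_succ_of_le hrdeg)]
      have hfin : ∑ k : Fin (m+1), a k * Complex.exp (Complex.I * (k:ℕ) * ω) =
          ∑ i ∈ Finset.range (m+1), r.coeff i * Complex.exp (Complex.I * (i:ℕ) * ω) :=
        Fin.sum_univ_eq_sum_range (fun i => r.coeff i * Complex.exp (Complex.I * (i:ℕ) * ω)) (m+1)
      rw [hfin]
      apply Finset.sum_congr rfl
      intro i hi
      congr 1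
      rw [← Complex.exp_nat_mul]
      congr 1
      push_cast
      ring
    set M : Matrix (Fin (m+1)) (Fin (m+1)) ℂ :=
      Matrix.of fun i j => starRingEnd ℂ (a i) * a j with hMdef
    have hpsd : M.PosSemidef := by
      have hM : M = (Matrix.of fun (_ : Fin 1) (j : Fin (m+1)) => a j)ᴴ *
          (Matrix.of fun (_ : Fin 1) (j : Fin (m+1)) => a j) := by
        ext i j
        simp [hMdef, Matrix.mul_apply, Matrix.conjTranspose_apply]
      rw [hM]
      exact Matrix.posSemidef_conjTranspose_mul_self _
    refine ⟨M, hpsd, fun ω => ?_⟩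
    have hS : (p ω : ℂ) = starRingEnd ℂ (∑ k : Fin (m+1), a k *
        Complex.exp (Complex.I * (k:ℕ) * ω)) *
        (∑ k : Fin (m+1), a k * Complex.exp (Complex.I * (k:ℕ) * ω)) := by
      rw [← heval ω, hrval ω, hs ω]
    rw [hS]
    simp only [dotProduct, Matrix.mulVec, Pi.star_apply, Matrix.of_apply,
      Complex.star_def, map_sum, map_mul, hMdef]
    rw [Finset.sum_mul_sum]
    apply Finset.sum_congr rfl
    intro i _
    rw [Finset.mul_sum]
    apply Finset.sum_congr rfl
    intro j _
    ring
  · rintro ⟨M, hM, hrep⟩ ω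
    have h := hM.dotProduct_mulVec_nonneg (fun k : Fin (m+1) => Complex.exp (Complex.I * (k:ℕ) * ω))
    rw [← hrep ω] at h
    exact Complex.zero_le_real.mp h
end

section
/- Let m ∈ ℕ, ε > 0, and let N : ℝ → ℝ be a continuous 2π-periodic function. Then the following are equivalent: (i) there exist real trigonometric polynomials P, Q of degree at most m with P(ω) ≥ 0 and Q(ω) ≥ 0 for all ω, the constant Fourier coefficient of Q equal to 1, and |P(ω) − N(ω)Q(ω)| ≤ ε·Q(ω) for all ω ∈ ℝ; (ii) there exist Hermitian positive semidefinite matrices 𝐏, 𝐐 ∈ ℂ^{(m+1)×(m+1)} with Tr(𝐐) = 1 such that for every ω ∈ ℝ, v(ω)* 𝐏 v(ω) − (N(ω) + ε)·v(ω)* 𝐐 v(ω) ≤ 0 and v(ω)* 𝐏 v(ω) − (N(ω) − ε)·v(ω)* 𝐐 v(ω) ≥ 0. -/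
open Complex Finset Polynomial
open scoped Matrix ComplexOrder

/-- The vector of complex exponentials `v(ω) = (1, e^{iω}, …, e^{imω})`. -/
noncomputable def expVec (m : ℕ) (ω : ℝ) : Fin (m + 1) → ℂ :=
  fun k => Complex.exp (Complex.I * (k : ℕ) * ω)

lemma integral_exp_int (d : ℤ) :
    ∫ ω in (0:ℝ)..(2*Real.pi), Complex.exp (Complex.I * d * ω) =
      if d = 0 then (2*Real.pi : ℂ) else 0 := by
  rcases eq_or_ne d 0 with h | h
  · simp [h]
  · have hc : (Complex.I * d : ℂ) ≠ 0 := by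
      simp [Complex.I_ne_zero, h]
    rw [if_neg h]
    have := integral_exp_mul_complex (a := 0) (b := 2*Real.pi) hc
    have h2 : ∀ x : ℝ, Complex.I * d * x = (Complex.I * d) * x := fun x => by ring
    simp only [h2] at *
    rw [this]
    have he : Complex.exp (Complex.I * d * ((2*Real.pi : ℝ):ℂ)) = 1 := by
      have h3 := Complex.exp_int_mul_two_pi_mul_I d
      rw [← h3]
      congr 1
      push_cast
      ring
    rw [he]
    simp

lemma trig_zero (n : ℕ) (c : ℤ → ℂ)
    (h : ∀ ω : ℝ, ∑ k ∈ Icc (-(n:ℤ)) (n:ℤ), c k * Complex.exp (Complex.I * k * ω) = 0) :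
    ∀ j ∈ Icc (-(n:ℤ)) (n:ℤ), c j = 0 := by
  intro j hj
  have key : ∫ ω in (0:ℝ)..(2*Real.pi),
      (∑ k ∈ Icc (-(n:ℤ)) (n:ℤ), c k * Complex.exp (Complex.I * k * ω)) *
        Complex.exp (Complex.I * (-j) * ω) = 0 := by
    simp only [h, zero_mul, intervalIntegral.integral_zero]
  have expand : ∀ ω : ℝ,
      (∑ k ∈ Icc (-(n:ℤ)) (n:ℤ), c k * Complex.exp (Complex.I * k * ω)) *
        Complex.exp (Complex.I * (-j) * ω)
      = ∑ k ∈ Icc (-(n:ℤ)) (n:ℤ), c k * Complex.exp (Complex.I * (k - j) * ω) := by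
    intro ω
    rw [Finset.sum_mul]
    refine Finset.sum_congr rfl fun k _ => ?_
    rw [mul_assoc, ← Complex.exp_add]
    congr 2
    push_cast
    ring
  rw [intervalIntegral.integral_congr (fun ω _ => expand ω)] at key
  rw [intervalIntegral.integral_finset_sum] at key
  · have : ∀ k ∈ Icc (-(n:ℤ)) (n:ℤ),
        ∫ ω in (0:ℝ)..(2*Real.pi), c k * Complex.exp (Complex.I * (k - j) * ω)
        = if k = j then c k * (2*Real.pi:ℂ) else 0 := by
      intro k _
      rw [intervalIntegral.integral_const_mul]
      have hi := integral_exp_int (k - j)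
      push_cast at hi ⊢
      rw [hi]
      rcases eq_or_ne k j with rfl | hk
      · simp
      · rw [if_neg (sub_ne_zero.mpr hk), if_neg hk, mul_zero]
    rw [Finset.sum_congr rfl this, Finset.sum_ite_eq' _ j _, if_pos hj] at key
    have h2 : (2*Real.pi:ℂ) ≠ 0 := by
      norm_num [Complex.ext_iff, Real.pi_ne_zero]
    exact (mul_eq_zero.mp key).resolve_right h2
  · intro k _
    apply Continuous.intervalIntegrable
    exact continuous_const.mul (Complex.continuous_exp.comp (by continuity))


noncomputable def diagCoeff (m : ℕ) (M : Matrix (Fin (m+1)) (Fin (m+1)) ℂ) : ℤ → ℂ :=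
  fun d => ∑ j : Fin (m+1), ∑ k : Fin (m+1), if ((k:ℤ) - (j:ℤ) = d) then M j k else 0

lemma conj_expVec (m : ℕ) (ω : ℝ) (j k : Fin (m+1)) :
    (starRingEnd ℂ) (expVec m ω j) * expVec m ω k
      = Complex.exp (Complex.I * (((k:ℤ) - (j:ℤ) : ℤ)) * ω) := by
  unfold expVec
  rw [← Complex.exp_conj, ← Complex.exp_add]
  congr 1
  simp only [map_mul, Complex.conj_I, Complex.conj_ofReal, map_natCast]
  push_cast
  ring

lemma gram_expand (m : ℕ) (M : Matrix (Fin (m+1)) (Fin (m+1)) ℂ) (ω : ℝ) :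
    star (expVec m ω) ⬝ᵥ M.mulVec (expVec m ω) =
      ∑ d ∈ Icc (-(m:ℤ)) (m:ℤ), diagCoeff m M d * Complex.exp (Complex.I * d * ω) := by
  have lhs : star (expVec m ω) ⬝ᵥ M.mulVec (expVec m ω)
      = ∑ j : Fin (m+1), ∑ k : Fin (m+1),
          M j k * Complex.exp (Complex.I * (((k:ℤ) - (j:ℤ) : ℤ)) * ω) := by
    simp only [dotProduct, Matrix.mulVec, Pi.star_apply, Complex.star_def,
      Finset.mul_sum]
    refine Finset.sum_congr rfl fun j _ => Finset.sum_congr rfl fun k _ => ?_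
    rw [mul_comm (M j k) (expVec m ω k), ← mul_assoc, conj_expVec, mul_comm]
  rw [lhs]
  unfold diagCoeff
  simp only [Finset.sum_mul]
  conv_rhs => rw [Finset.sum_comm]
  refine Finset.sum_congr rfl fun j _ => ?_
  conv_rhs => rw [Finset.sum_comm]
  refine Finset.sum_congr rfl fun k _ => ?_
  have : ∀ d ∈ Icc (-(m:ℤ)) (m:ℤ),
      (if ((k:ℤ) - (j:ℤ) = d) then M j k else 0) * Complex.exp (Complex.I * d * ω)
      = if ((k:ℤ) - (j:ℤ) = d) then M j k * Complex.exp (Complex.I * d * ω) else 0 := by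
    intro d _; split <;> simp
  rw [Finset.sum_congr rfl this, Finset.sum_ite_eq _ ((k:ℤ) - (j:ℤ))
      (fun d => M j k * Complex.exp (Complex.I * d * ω)), if_pos]
  simp only [Finset.mem_Icc]
  omega

lemma diagCoeff_zero (m : ℕ) (M : Matrix (Fin (m+1)) (Fin (m+1)) ℂ) :
    diagCoeff m M 0 = M.trace := by
  unfold diagCoeff
  rw [Matrix.trace]
  refine Finset.sum_congr rfl fun j _ => ?_
  have : ∀ k : Fin (m+1), ((k:ℤ) - (j:ℤ) = 0) ↔ k = j := by
    intro k
    constructor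
    · intro h; ext; omega
    · intro h; subst h; ring
  simp only [this]
  simp [Matrix.diag]

lemma diagCoeff_neg (m : ℕ) (M : Matrix (Fin (m+1)) (Fin (m+1)) ℂ)
    (hM : M.IsHermitian) (d : ℤ) :
    diagCoeff m M (-d) = (starRingEnd ℂ) (diagCoeff m M d) := by
  unfold diagCoeff
  rw [map_sum]
  rw [Finset.sum_comm]
  refine Finset.sum_congr rfl fun j _ => ?_
  rw [map_sum]
  refine Finset.sum_congr rfl fun k _ => ?_
  rw [apply_ite (starRingEnd ℂ), map_zero]
  have h1 : ((j:ℤ) - (k:ℤ) = -d) ↔ ((k:ℤ) - (j:ℤ) = d) := by omega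
  have hsym : (starRingEnd ℂ) (M j k) = M k j := congrFun (congrFun hM k) j
  rw [hsym]
  simp only [h1]

noncomputable def gramOf {m : ℕ} (a : Fin (m+1) → ℂ) : Matrix (Fin (m+1)) (Fin (m+1)) ℂ :=
  fun j k => (starRingEnd ℂ) (a j) * a k

lemma gramOf_posSemidef {m : ℕ} (a : Fin (m+1) → ℂ) : (gramOf a).PosSemidef := by
  have : gramOf a = (Matrix.replicateRow Unit a)ᴴ * Matrix.replicateRow Unit a := by
    ext j k
    simp [gramOf, Matrix.mul_apply, Matrix.conjTranspose_apply, Matrix.replicateRow_apply, mul_comm]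
  rw [this]
  exact Matrix.posSemidef_conjTranspose_mul_self _

lemma gramOf_trace {m : ℕ} (a : Fin (m+1) → ℂ) :
    (gramOf a).trace = ∑ j, (starRingEnd ℂ) (a j) * a j := by
  simp [Matrix.trace, gramOf, Matrix.diag]

lemma gramOf_dot {m : ℕ} (a v : Fin (m+1) → ℂ) :
    star v ⬝ᵥ (gramOf a).mulVec v
      = (starRingEnd ℂ) (∑ j, a j * v j) * (∑ k, a k * v k) := by
  simp only [dotProduct, Matrix.mulVec, gramOf, Pi.star_apply, Complex.star_def,
    map_sum, Finset.sum_mul, Finset.mul_sum, map_mul]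
  conv_rhs => rw [Finset.sum_comm]
  refine Finset.sum_congr rfl fun j _ => Finset.sum_congr rfl fun k _ => ?_
  ring

lemma Icc_eq_map_range (n : ℕ) :
    Finset.Icc (-(n:ℤ)) (n:ℤ) =
      (Finset.range (2*n+1)).map ⟨fun k : ℕ => (k:ℤ) - n, fun a b h => by simp only at h; omega⟩ := by
  ext x
  simp only [Finset.mem_Icc, Finset.mem_map, Finset.mem_range, Function.Embedding.coeFn_mk]
  constructor
  · rintro ⟨h1, h2⟩
    exact ⟨(x + n).toNat, by omega, by show ((x + n).toNat : ℤ) - n = x; omega⟩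
  · rintro ⟨a, ha, rfl⟩
    show -(n:ℤ) ≤ (a:ℤ) - n ∧ (a:ℤ) - n ≤ n
    omega

lemma sum_Icc_eq_range (n : ℕ) (g : ℤ → ℂ) :
    ∑ j ∈ Finset.Icc (-(n:ℤ)) (n:ℤ), g j = ∑ k ∈ Finset.range (2*n+1), g ((k:ℤ) - n) := by
  rw [Icc_eq_map_range, Finset.sum_map]
  rfl

lemma sum_Icc_neg_reindex (n : ℕ) (g : ℤ → ℂ) :
    ∑ j ∈ Finset.Icc (-(n:ℤ)) (n:ℤ), g (-j) = ∑ j ∈ Finset.Icc (-(n:ℤ)) (n:ℤ), g j := by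
  refine Finset.sum_nbij' (fun j => -j) (fun j => -j) ?_ ?_ ?_ ?_ (fun a _ => rfl) <;>
    simp only [Finset.mem_Icc] <;> intros <;> omega

lemma hasDerivAt_cexp_int (c : ℂ) (k : ℤ) (ω : ℝ) :
    HasDerivAt (fun ω : ℝ => c * Complex.exp (Complex.I * k * ω))
      (c * (Complex.I * k) * Complex.exp (Complex.I * k * ω)) ω := by
  have h1 : HasDerivAt (fun ω : ℝ => ((ω : ℂ))) 1 ω := Complex.ofRealCLM.hasDerivAt
  have h2 : HasDerivAt (fun ω : ℝ => (Complex.I * k) * (ω : ℂ)) (Complex.I * k) ω := by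
    simpa using h1.const_mul (Complex.I * k)
  have h3 : HasDerivAt (fun ω : ℝ => Complex.exp (Complex.I * k * ω))
      (Complex.exp (Complex.I * k * ω) * (Complex.I * k)) ω := by
    have := h2.cexp
    simpa [mul_assoc] using this
  have := h3.const_mul c
  rw [show c * (Complex.I * k) * Complex.exp (Complex.I * k * ω)
    = c * (Complex.exp (Complex.I * k * ω) * (Complex.I * k)) by ring]
  exact this

lemma exp_pow_eq (k : ℕ) (ω : ℝ) :
    Complex.exp (Complex.I * ω) ^ k = Complex.exp (Complex.I * k * ω) := by
  rw [← Complex.exp_nat_mul]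
  ring_nf

lemma conj_exp_I (ω : ℝ) :
    (starRingEnd ℂ) (Complex.exp (Complex.I * ω)) = Complex.exp (-(Complex.I * ω)) := by
  rw [← Complex.exp_conj]
  congr 1
  simp [Complex.conj_ofReal]

lemma eval_exp_sum (D : ℕ) (p : Polynomial ℂ) (hp : p.natDegree ≤ D) (ω : ℝ) :
    p.eval (Complex.exp (Complex.I * ω)) =
      ∑ k ∈ Finset.range (D+1), p.coeff k * Complex.exp (Complex.I * k * ω) := by
  rw [Polynomial.eval_eq_sum_range' (Nat.lt_succ_of_le hp)]
  exact Finset.sum_congr rfl fun k _ => by rw [exp_pow_eq]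

lemma fejerRiesz (m : ℕ) (Q : ℝ → ℝ) (c : ℤ → ℂ)
    (hQ : ∀ ω : ℝ, (Q ω : ℂ) =
      ∑ k ∈ Icc (-(m : ℤ)) (m : ℤ), c k * Complex.exp (Complex.I * k * ω))
    (hpos : ∀ ω : ℝ, 0 ≤ Q ω) :
    ∃ p : Polynomial ℂ, p.natDegree ≤ m ∧
      ∀ ω : ℝ, (Q ω : ℂ) = p.eval (Complex.exp (Complex.I * ω)) *
        (starRingEnd ℂ) (p.eval (Complex.exp (Complex.I * ω))) := by
  induction m generalizing Q c with
  | zero =>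
    have h0 : ∀ ω : ℝ, (Q ω : ℂ) = c 0 := by
      intro ω
      rw [hQ ω]
      simp
    have hQconst : ∀ ω : ℝ, Q ω = Q 0 := by
      intro ω
      have h2 : ((Q ω : ℝ) : ℂ) = ((Q 0 : ℝ) : ℂ) := by rw [h0 ω, h0 0]
      exact_mod_cast h2
    refine ⟨Polynomial.C ((Real.sqrt (Q 0) : ℝ) : ℂ), by simp, fun ω => ?_⟩
    rw [hQconst ω]
    simp only [Polynomial.eval_C, Complex.conj_ofReal, ← Complex.ofReal_mul]
    rw [Real.mul_self_sqrt (hpos 0)]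
  | succ m ih =>
    set n : ℕ := m + 1 with hn
    -- coefficient symmetry
    have hsym : ∀ k ∈ Icc (-(n:ℤ)) (n:ℤ), c (-k) = (starRingEnd ℂ) (c k) := by
      have hvanish : ∀ ω : ℝ, ∑ k ∈ Icc (-(n:ℤ)) (n:ℤ),
          (c k - (starRingEnd ℂ) (c (-k))) * Complex.exp (Complex.I * k * ω) = 0 := by
        intro ω
        have h1 : (starRingEnd ℂ) ((Q ω : ℂ)) = (Q ω : ℂ) := Complex.conj_ofReal _
        rw [hQ ω] at h1
        rw [map_sum] at h1
        have h2 : ∀ k ∈ Icc (-(n:ℤ)) (n:ℤ),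
            (starRingEnd ℂ) (c k * Complex.exp (Complex.I * k * ω))
              = (fun j => (starRingEnd ℂ) (c (-j)) * Complex.exp (Complex.I * j * ω)) (-k) := by
          intro k _
          simp only [map_mul, neg_neg]
          congr 1
          rw [← Complex.exp_conj]
          congr 1
          simp only [map_mul, Complex.conj_I, map_intCast, Complex.conj_ofReal]
          push_cast
          ring
        rw [Finset.sum_congr rfl h2, sum_Icc_neg_reindex n
          (fun j => (starRingEnd ℂ) (c (-j)) * Complex.exp (Complex.I * j * ω))] at h1
        simp only [sub_mul, Finset.sum_sub_distrib, h1, sub_self]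
      have := trig_zero n (fun k => c k - (starRingEnd ℂ) (c (-k))) hvanish
      intro k hk
      have hk' : -k ∈ Icc (-(n:ℤ)) (n:ℤ) := by
        simp only [Finset.mem_Icc] at hk ⊢; omega
      have h3 := this k hk
      have h4 : c k = (starRingEnd ℂ) (c (-k)) := by
        have := sub_eq_zero.mp h3
        exact this
      rw [h4, Complex.conj_conj]
    by_cases hc : c n = 0
    · -- degree drop
      have hcm : c (-(n:ℤ)) = 0 := by
        have := hsym (n:ℤ) (by simp [Finset.mem_Icc])
        rw [this, hc, map_zero]
      have hQ' : ∀ ω : ℝ, (Q ω : ℂ) =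
          ∑ k ∈ Icc (-(m:ℤ)) (m:ℤ), c k * Complex.exp (Complex.I * k * ω) := by
        intro ω
        rw [hQ ω]
        symm
        apply Finset.sum_subset
        · apply Finset.Icc_subset_Icc <;> push_cast <;> omega
        · intro x hx hnx
          simp only [Finset.mem_Icc] at hx hnx
          have : x = (n:ℤ) ∨ x = -(n:ℤ) := by push_cast at hx hnx ⊢; omega
          rcases this with rfl | rfl
          · rw [hc, zero_mul]
          · rw [hcm, zero_mul]
      obtain ⟨p, hdeg, hp⟩ := ih Q c hQ' hpos
      exact ⟨p, hdeg.trans (Nat.le_succ m), hp⟩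
    · -- main case
      set q : Polynomial ℂ :=
        ∑ k ∈ Finset.range (2*n+1), Polynomial.C (c ((k:ℤ) - n)) * Polynomial.X ^ k with hqdef
      have hcoeff : ∀ i : ℕ, q.coeff i = if i < 2*n+1 then c ((i:ℤ) - n) else 0 := by
        intro i
        rw [hqdef, Polynomial.finset_sum_coeff]
        simp only [Polynomial.coeff_C_mul, Polynomial.coeff_X_pow, mul_ite, mul_one, mul_zero]
        rw [Finset.sum_ite_eq (Finset.range (2*n+1)) i (fun k => c ((k:ℤ) - n))]
        simp [Finset.mem_range]
      have hq0 : q ≠ 0 := by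
        intro h
        apply hc
        have := hcoeff (2*n)
        rw [h] at this
        simp only [Polynomial.coeff_zero] at this
        rw [if_pos (by omega)] at this
        have h2 : ((2*n:ℕ):ℤ) - n = (n:ℤ) := by push_cast; ring
        rw [h2] at this
        exact this.symm
      have hdeg : q.natDegree = 2*n := by
        apply le_antisymm
        · rw [Polynomial.natDegree_le_iff_coeff_eq_zero]
          intro N hN
          rw [hcoeff N, if_neg (by omega)]
        · apply Polynomial.le_natDegree_of_ne_zero
          rw [hcoeff (2*n), if_pos (by omega)]
          have h2 : ((2*n:ℕ):ℤ) - n = (n:ℤ) := by push_cast; ring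
          rw [h2]
          exact hc
      have heval : ∀ ω : ℝ, q.eval (Complex.exp (Complex.I * ω)) =
          Complex.exp (Complex.I * n * ω) * (Q ω : ℂ) := by
        intro ω
        rw [eval_exp_sum (2*n) q (le_of_eq hdeg) ω, hQ ω, Finset.mul_sum]
        have h2 : ∀ j ∈ Icc (-(n:ℤ)) (n:ℤ),
            Complex.exp (Complex.I * n * ω) * (c j * Complex.exp (Complex.I * j * ω))
              = c j * Complex.exp (Complex.I * (j + n) * ω) := by
          intro j _
          rw [mul_comm, mul_assoc, ← Complex.exp_add]
          congr 2
          push_cast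
          ring
        rw [Finset.sum_congr rfl h2, sum_Icc_eq_range n
          (fun j => c j * Complex.exp (Complex.I * (j + n) * ω))]
        refine Finset.sum_congr rfl fun k hk => ?_
        rw [hcoeff k, if_pos (Finset.mem_range.mp hk)]
        congr 1
        push_cast
        ring
      -- get a root
      obtain ⟨α, hα⟩ : ∃ α : ℂ, q.IsRoot α := by
        apply Complex.exists_root
        rw [Polynomial.degree_eq_natDegree hq0, hdeg]
        exact_mod_cast by omega
      have hα0 : α ≠ 0 := by
        intro h
        rw [h] at hα
        have h1 : q.coeff 0 = 0 := by
          rw [Polynomial.coeff_zero_eq_eval_zero]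
          exact hα
        have h2 := hcoeff 0
        rw [if_pos (by omega)] at h2
        have h3 : ((0:ℕ):ℤ) - n = -(n:ℤ) := by push_cast; ring
        rw [h3] at h2
        have h4 : c (-(n:ℤ)) = 0 := by rw [← h2]; exact h1
        rw [hsym (n:ℤ) (by simp [Finset.mem_Icc])] at h4
        exact hc (by simpa using congrArg (starRingEnd ℂ) h4)
      set β : ℂ := ((starRingEnd ℂ) α)⁻¹ with hβdef
      have hαconj : (starRingEnd ℂ) α ≠ 0 := by
        simpa using hα0
      -- factorization q = (X - C α) * (X - C β) * q1
      have hevalα : ∑ k ∈ Finset.range (2*n+1), c ((k:ℤ)-n) * α ^ k = 0 := by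
        have h0 : q.eval α = ∑ k ∈ Finset.range (2*n+1), q.coeff k * α ^ k :=
          Polynomial.eval_eq_sum_range' (by rw [hdeg]; omega) α
        rw [Finset.sum_congr rfl (fun k hk => by
          rw [hcoeff k, if_pos (Finset.mem_range.mp hk)])] at h0
        rw [← h0]
        exact hα
      obtain ⟨q1, hfac⟩ : ∃ q1 : Polynomial ℂ,
          q = (Polynomial.X - Polynomial.C α) * (Polynomial.X - Polynomial.C β) * q1 := by
        obtain ⟨h, hh⟩ := (Polynomial.dvd_iff_isRoot).mpr hα
        have hrootβ : h.IsRoot β := by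
          by_cases hβα : β = α
          · -- root on the unit circle : use the local-minimum derivative argument
            have hcirc : α * (starRingEnd ℂ) α = 1 := by
              have h1 := congrArg (fun z => (starRingEnd ℂ) α * z) hβα
              simp only [hβdef, mul_inv_cancel₀ hαconj] at h1
              rw [mul_comm, ← h1]
            have habs : ‖α‖ = 1 := by
              have h2 : ((Complex.normSq α : ℝ) : ℂ) = 1 := by
                rw [← Complex.mul_conj]; exact hcirc
              have h3 : Complex.normSq α = 1 := by exact_mod_cast h2
              rw [Complex.norm_def, h3, Real.sqrt_one]
            set ω0 : ℝ := α.arg with hω0def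
            have hω0 : Complex.exp (Complex.I * ω0) = α := by
              have h4 := Complex.norm_mul_exp_arg_mul_I α
              rw [habs, Complex.ofReal_one, one_mul] at h4
              rw [← h4]; congr 1; ring
            set F : ℝ → ℂ := fun ω => ∑ k ∈ Finset.range (2*n+1),
              c ((k:ℤ)-n) * Complex.exp (Complex.I * (((k:ℤ)-(n:ℤ) : ℤ) : ℂ) * ω) with hFdef
            have hFQ : ∀ ω : ℝ, F ω = (Q ω : ℂ) := by
              intro ω
              rw [hQ ω, sum_Icc_eq_range n (fun j => c j * Complex.exp (Complex.I * j * ω))]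
            have hQω0 : Q ω0 = 0 := by
              have h5 := heval ω0
              rw [hω0] at h5
              rw [hα.eq_zero] at h5
              have h6 := (mul_eq_zero.mp h5.symm).resolve_left (Complex.exp_ne_zero _)
              exact_mod_cast h6
            have hlocal : IsLocalMin Q ω0 :=
              Filter.Eventually.of_forall fun x => by rw [hQω0]; exact hpos x
            set F' : ℂ := ∑ k ∈ Finset.range (2*n+1),
              c ((k:ℤ)-n) * (Complex.I * (((k:ℤ)-(n:ℤ) : ℤ) : ℂ)) *
                Complex.exp (Complex.I * (((k:ℤ)-(n:ℤ) : ℤ) : ℂ) * ω0) with hF'def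
            have hF : HasDerivAt F F' ω0 :=
              HasDerivAt.fun_sum fun k _ => hasDerivAt_cexp_int (c ((k:ℤ)-n)) ((k:ℤ)-(n:ℤ)) ω0
            have hQre : HasDerivAt Q F'.re ω0 := by
              have h7 := Complex.reCLM.hasFDerivAt.comp_hasDerivAt ω0 hF
              have h8 : (Complex.reCLM ∘ F) = Q := by
                funext x
                simp [Function.comp, hFQ x]
              rwa [h8] at h7
            have hre0 : F'.re = 0 := hlocal.hasDerivAt_eq_zero hQre
            have him0 : F'.im = 0 := by
              have h7 := Complex.imCLM.hasFDerivAt.comp_hasDerivAt ω0 hF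
              have h8 : (Complex.imCLM ∘ F) = fun _ => (0:ℝ) := by
                funext x
                simp [Function.comp, hFQ x]
              rw [h8] at h7
              exact h7.unique (hasDerivAt_const ω0 0)
            have hF'0 : F' = 0 := Complex.ext hre0 him0
            have hsum2 : ∑ k ∈ Finset.range (2*n+1),
                c ((k:ℤ)-n) * (((k:ℤ)-(n:ℤ) : ℤ) : ℂ) * α ^ k = 0 := by
              have h9 := congrArg (fun z => (-Complex.I) * Complex.exp (Complex.I * n * ω0) * z) hF'0
              simp only [hF'def, mul_zero, Finset.mul_sum] at h9
              rw [← h9]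
              refine Finset.sum_congr rfl fun k hk => ?_
              have hh1 : Complex.exp (Complex.I * (((k:ℤ)-(n:ℤ) : ℤ) : ℂ) * ω0) *
                  Complex.exp (Complex.I * n * ω0) = Complex.exp (Complex.I * (k:ℕ) * ω0) := by
                rw [← Complex.exp_add]; congr 1; push_cast; ring
              have hαk : α ^ k = Complex.exp (Complex.I * (k:ℕ) * ω0) := by
                rw [← hω0, exp_pow_eq]
              rw [hαk, ← hh1]
              have hII : (-Complex.I) * Complex.I = 1 := by
                simp [Complex.I_mul_I]
              calc c ((k:ℤ)-n) * (((k:ℤ)-(n:ℤ) : ℤ) : ℂ) *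
                    (Complex.exp (Complex.I * (((k:ℤ)-(n:ℤ) : ℤ) : ℂ) * ω0) *
                      Complex.exp (Complex.I * n * ω0))
                  = ((-Complex.I) * Complex.I) * (c ((k:ℤ)-n) * (((k:ℤ)-(n:ℤ) : ℤ) : ℂ) *
                    (Complex.exp (Complex.I * (((k:ℤ)-(n:ℤ) : ℤ) : ℂ) * ω0) *
                      Complex.exp (Complex.I * n * ω0))) := by rw [hII, one_mul]
                _ = -Complex.I * Complex.exp (Complex.I * ↑n * ↑ω0) *
                    (c ((k:ℤ)-n) * (Complex.I * (((k:ℤ)-(n:ℤ) : ℤ) : ℂ)) *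
                      Complex.exp (Complex.I * (((k:ℤ)-(n:ℤ) : ℤ) : ℂ) * ω0)) := by ring
            have hsum3 : ∑ k ∈ Finset.range (2*n+1),
                c ((k:ℤ)-n) * (k:ℕ) * α ^ k = 0 := by
              have h10 : ∀ k ∈ Finset.range (2*n+1),
                  c ((k:ℤ)-n) * (k:ℕ) * α ^ k
                    = c ((k:ℤ)-n) * (((k:ℤ)-(n:ℤ) : ℤ) : ℂ) * α ^ k
                      + (n:ℂ) * (c ((k:ℤ)-n) * α ^ k) := by
                intro k _
                push_cast
                ring
              rw [Finset.sum_congr rfl h10, Finset.sum_add_distrib, hsum2,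
                ← Finset.mul_sum, hevalα, mul_zero, add_zero]
            have hqd : q.derivative.eval α = 0 := by
              have h11 : q.derivative = ∑ k ∈ Finset.range (2*n+1),
                  Polynomial.C (c ((k:ℤ)-n) * (k:ℕ)) * Polynomial.X ^ (k-1) := by
                rw [hqdef, Polynomial.derivative_sum]
                exact Finset.sum_congr rfl fun k _ => Polynomial.derivative_C_mul_X_pow _ _
              have h12 : α * q.derivative.eval α
                  = ∑ k ∈ Finset.range (2*n+1), c ((k:ℤ)-n) * (k:ℕ) * α ^ k := by
                rw [h11, Polynomial.eval_finset_sum]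
                rw [Finset.mul_sum]
                refine Finset.sum_congr rfl fun k _ => ?_
                simp only [Polynomial.eval_mul, Polynomial.eval_C, Polynomial.eval_pow,
                  Polynomial.eval_X]
                rcases Nat.eq_zero_or_pos k with rfl | hkpos
                · simp
                · have : α ^ (k-1) * α = α ^ k := by
                    rw [← pow_succ]
                    congr 1
                    omega
                  calc α * (c ((k:ℤ)-n) * (k:ℕ) * α ^ (k-1))
                      = c ((k:ℤ)-n) * (k:ℕ) * (α ^ (k-1) * α) := by ring
                    _ = c ((k:ℤ)-n) * (k:ℕ) * α ^ k := by rw [this]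
              rw [hsum3] at h12
              exact (mul_eq_zero.mp h12).resolve_left hα0
            have hhα : h.eval α = 0 := by
              have h13 : q.derivative = h + (Polynomial.X - Polynomial.C α) * h.derivative := by
                rw [hh, Polynomial.derivative_mul, Polynomial.derivative_X_sub_C]
                ring
              have h14 := congrArg (Polynomial.eval α) h13
              simp only [Polynomial.eval_add, Polynomial.eval_mul, Polynomial.eval_sub,
                Polynomial.eval_X, Polynomial.eval_C, sub_self, zero_mul, add_zero] at h14
              rw [hqd] at h14
              exact h14.symm
            rw [hβα]
            exact hhα
          · -- root off the unit circle : use the coefficient symmetry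
            have hconjsum : ∑ k ∈ Finset.range (2*n+1),
                (starRingEnd ℂ) (c ((k:ℤ)-n)) * ((starRingEnd ℂ) α) ^ k = 0 := by
              have h15 := congrArg (starRingEnd ℂ) hevalα
              simpa only [map_sum, map_mul, map_pow, map_zero] using h15
            have hb : (starRingEnd ℂ) α * β = 1 := mul_inv_cancel₀ hαconj
            have hβsum : ∑ k ∈ Finset.range (2*n+1),
                (starRingEnd ℂ) (c ((k:ℤ)-n)) * β ^ (2*n-k) = 0 := by
              have h16 := congrArg (fun z => z * β ^ (2*n)) hconjsum
              simp only [Finset.sum_mul, zero_mul] at h16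
              rw [← h16]
              refine Finset.sum_congr rfl fun k hk => ?_
              have hk' := Finset.mem_range.mp hk
              rw [mul_assoc]
              congr 1
              calc β ^ (2*n-k)
                  = ((starRingEnd ℂ) α * β) ^ k * β ^ (2*n-k) := by rw [hb, one_pow, one_mul]
                _ = ((starRingEnd ℂ) α) ^ k * (β ^ k * β ^ (2*n-k)) := by
                    rw [mul_pow]; ring
                _ = ((starRingEnd ℂ) α) ^ k * β ^ (2*n) := by
                    rw [← pow_add]
                    congr 2
                    omega
            have hqβ : q.eval β = 0 := by
              have h17 : q.eval β = ∑ k ∈ Finset.range (2*n+1), c ((k:ℤ)-n) * β ^ k := by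
                rw [Polynomial.eval_eq_sum_range' (n := 2*n+1) (by rw [hdeg]; omega) β]
                exact Finset.sum_congr rfl fun k hk => by
                  rw [hcoeff k, if_pos (Finset.mem_range.mp hk)]
              rw [h17]
              have h18 : ∀ k ∈ Finset.range (2*n+1),
                  c ((k:ℤ)-n) * β ^ k
                    = (starRingEnd ℂ) (c ((n:ℤ)-k)) * β ^ k := by
                intro k hk
                have hk' := Finset.mem_range.mp hk
                have hmem : ((n:ℤ)-k) ∈ Icc (-(n:ℤ)) (n:ℤ) := by
                  simp only [Finset.mem_Icc]; omega
                have := hsym ((n:ℤ)-k) hmem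
                have heq : -((n:ℤ)-k) = (k:ℤ)-n := by ring
                rw [heq] at this
                rw [this]
              rw [Finset.sum_congr rfl h18]
              rw [← hβsum]
              refine Finset.sum_nbij' (fun k => 2*n-k) (fun k => 2*n-k) ?_ ?_ ?_ ?_ ?_
              · intro a ha; simp only [Finset.mem_range] at ha ⊢; omega
              · intro a ha; beta_reduce; simp only [Finset.mem_range] at ha ⊢; omega
              · intro a ha; beta_reduce; simp only [Finset.mem_range] at ha; omega
              · intro a ha; beta_reduce; simp only [Finset.mem_range] at ha; omega
              · intro a ha
                beta_reduce
                have ha' := Finset.mem_range.mp ha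
                have hc1 : ((2*n-a:ℕ):ℤ) - n = (n:ℤ) - a := by
                  push_cast [Nat.cast_sub (by omega : a ≤ 2*n)]
                  ring
                have hc2 : 2*n - (2*n-a) = a := by omega
                rw [hc1, hc2]
            have h19 := hqβ
            rw [hh, Polynomial.eval_mul] at h19
            have h20 : (Polynomial.X - Polynomial.C α).eval β ≠ 0 := by
              simp only [Polynomial.eval_sub, Polynomial.eval_X, Polynomial.eval_C]
              exact sub_ne_zero.mpr hβα
            exact (mul_eq_zero.mp h19).resolve_left h20
        obtain ⟨q1, hq1⟩ := (Polynomial.dvd_iff_isRoot).mpr hrootβ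
        exact ⟨q1, by rw [hh, hq1]; ring⟩
      have hq1ne : q1 ≠ 0 := by
        intro h; rw [h, mul_zero] at hfac; exact hq0 hfac
      have hq1deg : q1.natDegree = 2*m := by
        have h1 : (Polynomial.X - Polynomial.C α) ≠ (0: Polynomial ℂ) := Polynomial.X_sub_C_ne_zero α
        have h2 : (Polynomial.X - Polynomial.C β) ≠ (0: Polynomial ℂ) := Polynomial.X_sub_C_ne_zero β
        have := congrArg Polynomial.natDegree hfac
        rw [Polynomial.natDegree_mul (mul_ne_zero h1 h2) hq1ne,
          Polynomial.natDegree_mul h1 h2, Polynomial.natDegree_X_sub_C,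
          Polynomial.natDegree_X_sub_C, hdeg] at this
        omega
      set g : ℝ → ℂ := fun ω => -((starRingEnd ℂ) α)⁻¹ *
        (Complex.exp (-(Complex.I * m * ω)) * q1.eval (Complex.exp (Complex.I * ω))) with hgdef
      set d : ℤ → ℂ := fun j => -((starRingEnd ℂ) α)⁻¹ * q1.coeff (j + m).toNat with hddef
      have hgexp : ∀ ω : ℝ, g ω = ∑ j ∈ Icc (-(m:ℤ)) (m:ℤ),
          d j * Complex.exp (Complex.I * j * ω) := by
        intro ω
        rw [sum_Icc_eq_range m (fun j => d j * Complex.exp (Complex.I * j * ω))]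
        simp only [hgdef]
        rw [eval_exp_sum (2*m) q1 (le_of_eq hq1deg) ω]
        simp only [Finset.mul_sum]
        refine Finset.sum_congr rfl fun k hk => ?_
        simp only [hddef]
        have h1 : ((k:ℤ) - m + m) = (k:ℤ) := by ring
        rw [h1, Int.toNat_natCast]
        have h2 : Complex.exp (-(Complex.I * m * ω)) * Complex.exp (Complex.I * k * ω)
            = Complex.exp (Complex.I * (((k:ℤ) - (m:ℤ) : ℤ) : ℂ) * ω) := by
          rw [← Complex.exp_add]
          congr 1
          push_cast
          ring
        calc -((starRingEnd ℂ) α)⁻¹ *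
              (Complex.exp (-(Complex.I * m * ω)) * (q1.coeff k * Complex.exp (Complex.I * k * ω)))
            = -((starRingEnd ℂ) α)⁻¹ * q1.coeff k *
              (Complex.exp (-(Complex.I * m * ω)) * Complex.exp (Complex.I * k * ω)) := by ring
          _ = -((starRingEnd ℂ) α)⁻¹ * q1.coeff k *
              Complex.exp (Complex.I * (((k:ℤ) - (m:ℤ) : ℤ) : ℂ) * ω) := by rw [h2]
      have hQg : ∀ ω : ℝ, (Q ω : ℂ) =
          (Complex.exp (Complex.I * ω) - α) *
            (starRingEnd ℂ) (Complex.exp (Complex.I * ω) - α) * g ω := by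
        intro ω
        set z : ℂ := Complex.exp (Complex.I * ω) with hz
        have hzc : (starRingEnd ℂ) z = Complex.exp (-(Complex.I * ω)) := conj_exp_I ω
        have hzz : z * (starRingEnd ℂ) z = 1 := by
          rw [hzc, hz, ← Complex.exp_add]
          simp
        have hQ' : (Q ω : ℂ) = Complex.exp (-(Complex.I * n * ω)) * q.eval z := by
          rw [heval ω, ← mul_assoc, ← Complex.exp_add]
          simp
        rw [hQ', hfac]
        simp only [Polynomial.eval_mul, Polynomial.eval_sub, Polynomial.eval_X,
          Polynomial.eval_C, map_sub, hzc]
        have hsplit : Complex.exp (-(Complex.I * n * ω))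
            = Complex.exp (-(Complex.I * m * ω)) * Complex.exp (-(Complex.I * ω)) := by
          rw [← Complex.exp_add]
          congr 1
          rw [hn]
          push_cast
          ring
        have hkey : z - β = -z * (Complex.exp (-(Complex.I * ω)) - (starRingEnd ℂ) α) *
            ((starRingEnd ℂ) α)⁻¹ := by
          rw [hβdef, ← hzc]
          field_simp
          linear_combination hzz
        rw [hkey, hsplit]
        simp only [hgdef]
        rw [← hzc]
        linear_combination (-(Complex.exp (-(Complex.I * m * ω)) * (z - α) *
          ((starRingEnd ℂ) z - (starRingEnd ℂ) α) * ((starRingEnd ℂ) α)⁻¹ * q1.eval z)) * hzz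
      -- realness and nonnegativity of g
      have hgcont : Continuous g := by
        simp only [hgdef]
        refine continuous_const.mul (Continuous.mul ?_ ?_)
        · exact Complex.continuous_exp.comp
            ((continuous_const.mul Complex.continuous_ofReal).neg)
        · exact q1.continuous.comp
            (Complex.continuous_exp.comp (continuous_const.mul Complex.continuous_ofReal))
      have hgim : ∀ ω : ℝ, (g ω).im = 0 ∧ 0 ≤ (g ω).re := by
        set S : Set ℝ := {ω | Complex.exp (Complex.I * ω) ≠ α} with hSdef
        have hS : ∀ ω ∈ S, g ω =
            ((Q ω / Complex.normSq (Complex.exp (Complex.I * ω) - α) : ℝ) : ℂ) := by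
          intro ω hω
          have hne : Complex.exp (Complex.I * ω) - α ≠ 0 := sub_ne_zero.mpr hω
          have hns : Complex.normSq (Complex.exp (Complex.I * ω) - α) ≠ 0 := by
            simpa [Complex.normSq_eq_zero] using hne
          have h1 := hQg ω
          rw [Complex.mul_conj] at h1
          rw [Complex.ofReal_div, h1]
          rw [mul_comm]
          rw [mul_div_assoc]
          rw [div_self (by exact_mod_cast hns)]
          rw [mul_one]
        have hdense : Dense S := by
          have hcc : (Sᶜ : Set ℝ).Countable := by
            by_cases hne : (Sᶜ : Set ℝ).Nonempty
            · obtain ⟨ω1, hω1⟩ := hne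
              simp only [hSdef, Set.mem_compl_iff, Set.mem_setOf_eq, not_not] at hω1
              have hsub : Sᶜ ⊆ Set.range (fun k : ℤ => ω1 + k * (2*Real.pi)) := by
                intro ω hω
                simp only [hSdef, Set.mem_compl_iff, Set.mem_setOf_eq, not_not] at hω
                have h2 : Complex.exp (Complex.I * ω - Complex.I * ω1) = 1 := by
                  rw [Complex.exp_sub, hω, hω1]
                  exact div_self hα0
                rw [Complex.exp_eq_one_iff] at h2
                obtain ⟨kk, hk⟩ := h2
                refine ⟨kk, ?_⟩
                have h3 : Complex.I * ((ω:ℂ) - ω1) = Complex.I * (((kk:ℂ)) * (2*Real.pi)) := by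
                  rw [mul_sub, hk]
                  push_cast
                  ring
                have h4 := mul_left_cancel₀ Complex.I_ne_zero h3
                have h5 : (ω:ℝ) - ω1 = (kk:ℝ) * (2*Real.pi) := by exact_mod_cast h4
                simp only []
                linarith
              exact (Set.countable_range _).mono hsub
            · rw [Set.not_nonempty_iff_eq_empty] at hne
              rw [hne]
              exact Set.countable_empty
          have hd := hcc.dense_compl ℝ
          rwa [compl_compl] at hd
        have hsub1 : S ⊆ {ω : ℝ | (g ω).im = 0} := by
          intro ω hω
          simp only [Set.mem_setOf_eq, hS ω hω, Complex.ofReal_im]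
        have hsub2 : S ⊆ {ω : ℝ | 0 ≤ (g ω).re} := by
          intro ω hω
          simp only [Set.mem_setOf_eq, hS ω hω, Complex.ofReal_re]
          exact div_nonneg (hpos ω) (Complex.normSq_nonneg _)
        have hclosed1 : IsClosed {ω : ℝ | (g ω).im = 0} :=
          isClosed_eq (Complex.continuous_im.comp hgcont) continuous_const
        have hclosed2 : IsClosed {ω : ℝ | 0 ≤ (g ω).re} :=
          isClosed_le continuous_const (Complex.continuous_re.comp hgcont)
        intro ω
        constructor
        · exact closure_minimal hsub1 hclosed1 (by rw [hdense.closure_eq]; trivial)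
        · exact closure_minimal hsub2 hclosed2 (by rw [hdense.closure_eq]; trivial)
      set Q1 : ℝ → ℝ := fun ω => (g ω).re with hQ1def
      have hQ1C : ∀ ω : ℝ, (Q1 ω : ℂ) = g ω := by
        intro ω
        have h := hgim ω
        apply Complex.ext
        · simp [hQ1def]
        · simp [h.1]
      obtain ⟨p1, hp1deg, hp1⟩ := ih Q1 d
        (fun ω => by rw [hQ1C ω, hgexp ω]) (fun ω => (hgim ω).2)
      refine ⟨(Polynomial.X - Polynomial.C α) * p1, ?_, fun ω => ?_⟩
      · calc ((Polynomial.X - Polynomial.C α) * p1).natDegree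
            ≤ (Polynomial.X - Polynomial.C α).natDegree + p1.natDegree :=
              Polynomial.natDegree_mul_le
          _ ≤ 1 + m := by rw [Polynomial.natDegree_X_sub_C]; omega
          _ = m + 1 := by omega
      · rw [hQg ω]
        have hg' : g ω = (Q1 ω : ℂ) := (hQ1C ω).symm
        rw [hg', hp1 ω]
        simp only [Polynomial.eval_mul, Polynomial.eval_sub, Polynomial.eval_X,
          Polynomial.eval_C, map_mul]
        ring

/-- LMI characterization of the `ε`-sublevel set of the fixed-order rational
approximation problem: a continuous `2π`-periodic spectrum `N` admits a degree-`m`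
rational approximation `P/Q` (with `P, Q ≥ 0` trigonometric polynomials, the
constant Fourier coefficient of `Q` equal to `1`) within `ε` in the uniform norm
iff there are PSD Gram matrices `𝐏, 𝐐` with `Tr 𝐐 = 1` satisfying the two
pointwise trace inequalities. -/
theorem stmt_3 (m : ℕ) (ε : ℝ) (hε : 0 < ε) (N : ℝ → ℝ)
    (hN : Continuous N) (hper : ∀ ω : ℝ, N (ω + 2 * Real.pi) = N ω) :
    (∃ (P Q : ℝ → ℝ) (cP cQ : ℤ → ℂ),
        (∀ k : ℤ, cP (-k) = starRingEnd ℂ (cP k)) ∧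
        (∀ k : ℤ, cQ (-k) = starRingEnd ℂ (cQ k)) ∧
        (∀ ω : ℝ, (P ω : ℂ) =
          ∑ k ∈ Finset.Icc (-(m : ℤ)) (m : ℤ), cP k * Complex.exp (Complex.I * k * ω)) ∧
        (∀ ω : ℝ, (Q ω : ℂ) =
          ∑ k ∈ Finset.Icc (-(m : ℤ)) (m : ℤ), cQ k * Complex.exp (Complex.I * k * ω)) ∧
        (∀ ω : ℝ, 0 ≤ P ω) ∧ (∀ ω : ℝ, 0 ≤ Q ω) ∧ cQ 0 = 1 ∧
        (∀ ω : ℝ, |P ω - N ω * Q ω| ≤ ε * Q ω)) ↔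
      (∃ Pm Qm : Matrix (Fin (m + 1)) (Fin (m + 1)) ℂ,
        Pm.PosSemidef ∧ Qm.PosSemidef ∧ Qm.trace = 1 ∧
        ∀ ω : ℝ,
          (star (expVec m ω) ⬝ᵥ Pm.mulVec (expVec m ω)).re -
              (N ω + ε) * (star (expVec m ω) ⬝ᵥ Qm.mulVec (expVec m ω)).re ≤ 0 ∧
          0 ≤ (star (expVec m ω) ⬝ᵥ Pm.mulVec (expVec m ω)).re -
              (N ω - ε) * (star (expVec m ω) ⬝ᵥ Qm.mulVec (expVec m ω)).re) := by
  constructor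
  · rintro ⟨P, Q, cP, cQ, hsP, hsQ, hPrep, hQrep, hPpos, hQpos, hcQ0, hineq⟩
    obtain ⟨pP, hdegP, hPeval⟩ := fejerRiesz m P cP hPrep hPpos
    obtain ⟨pQ, hdegQ, hQeval⟩ := fejerRiesz m Q cQ hQrep hQpos
    set aP : Fin (m+1) → ℂ := fun j => pP.coeff j with haP
    set aQ : Fin (m+1) → ℂ := fun j => pQ.coeff j with haQ
    have hsumP : ∀ ω : ℝ, ∑ j : Fin (m+1), aP j * expVec m ω j
        = pP.eval (Complex.exp (Complex.I * ω)) := by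
      intro ω
      rw [eval_exp_sum m pP hdegP ω, ← Fin.sum_univ_eq_sum_range
        (fun k => pP.coeff k * Complex.exp (Complex.I * k * ω)) (m+1)]
      rfl
    have hsumQ : ∀ ω : ℝ, ∑ j : Fin (m+1), aQ j * expVec m ω j
        = pQ.eval (Complex.exp (Complex.I * ω)) := by
      intro ω
      rw [eval_exp_sum m pQ hdegQ ω, ← Fin.sum_univ_eq_sum_range
        (fun k => pQ.coeff k * Complex.exp (Complex.I * k * ω)) (m+1)]
      rfl
    have hdotP : ∀ ω : ℝ, star (expVec m ω) ⬝ᵥ (gramOf aP).mulVec (expVec m ω) = (P ω : ℂ) := by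
      intro ω
      rw [gramOf_dot, hsumP ω, hPeval ω]
      ring
    have hdotQ : ∀ ω : ℝ, star (expVec m ω) ⬝ᵥ (gramOf aQ).mulVec (expVec m ω) = (Q ω : ℂ) := by
      intro ω
      rw [gramOf_dot, hsumQ ω, hQeval ω]
      ring
    refine ⟨gramOf aP, gramOf aQ, gramOf_posSemidef aP, gramOf_posSemidef aQ, ?_, ?_⟩
    · -- trace = 1
      have hvanish : ∀ ω : ℝ, ∑ k ∈ Finset.Icc (-(m:ℤ)) (m:ℤ),
          (cQ k - diagCoeff m (gramOf aQ) k) * Complex.exp (Complex.I * k * ω) = 0 := by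
        intro ω
        have h1 : (Q ω : ℂ) = ∑ k ∈ Finset.Icc (-(m:ℤ)) (m:ℤ),
            diagCoeff m (gramOf aQ) k * Complex.exp (Complex.I * k * ω) :=
          (hdotQ ω).symm.trans (gram_expand m (gramOf aQ) ω)
        simp only [sub_mul, Finset.sum_sub_distrib]
        rw [← hQrep ω, ← h1, sub_self]
      have h2 := trig_zero m _ hvanish 0 (by simp [Finset.mem_Icc])
      have h3 : diagCoeff m (gramOf aQ) 0 = cQ 0 := by
        have := sub_eq_zero.mp h2
        exact this.symm
      rw [← diagCoeff_zero m (gramOf aQ), h3, hcQ0]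
    · intro ω
      rw [hdotP ω, hdotQ ω, Complex.ofReal_re, Complex.ofReal_re]
      have h4 := abs_le.mp (hineq ω)
      constructor
      · nlinarith [h4.1, h4.2]
      · nlinarith [h4.1, h4.2]
  · rintro ⟨Pm, Qm, hPSD, hQSD, htr, hineq⟩
    have hPval : ∀ ω : ℝ, ((star (expVec m ω) ⬝ᵥ Pm.mulVec (expVec m ω)).re : ℂ)
        = star (expVec m ω) ⬝ᵥ Pm.mulVec (expVec m ω) := by
      intro ω
      have h0 := hPSD.dotProduct_mulVec_nonneg (expVec m ω)
      rw [Complex.le_def] at h0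
      exact Complex.ext (Complex.ofReal_re _) (by rw [Complex.ofReal_im, ← h0.2]; simp)
    have hQval : ∀ ω : ℝ, ((star (expVec m ω) ⬝ᵥ Qm.mulVec (expVec m ω)).re : ℂ)
        = star (expVec m ω) ⬝ᵥ Qm.mulVec (expVec m ω) := by
      intro ω
      have h0 := hQSD.dotProduct_mulVec_nonneg (expVec m ω)
      rw [Complex.le_def] at h0
      exact Complex.ext (Complex.ofReal_re _) (by rw [Complex.ofReal_im, ← h0.2]; simp)
    refine ⟨fun ω => (star (expVec m ω) ⬝ᵥ Pm.mulVec (expVec m ω)).re,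
      fun ω => (star (expVec m ω) ⬝ᵥ Qm.mulVec (expVec m ω)).re,
      diagCoeff m Pm, diagCoeff m Qm,
      fun k => diagCoeff_neg m Pm hPSD.1 k,
      fun k => diagCoeff_neg m Qm hQSD.1 k,
      fun ω => (hPval ω).trans (gram_expand m Pm ω),
      fun ω => (hQval ω).trans (gram_expand m Qm ω),
      ?_, ?_, ?_, ?_⟩
    · intro ω
      have h0 := hPSD.dotProduct_mulVec_nonneg (expVec m ω)
      rw [Complex.le_def] at h0
      simpa using h0.1
    · intro ω
      have h0 := hQSD.dotProduct_mulVec_nonneg (expVec m ω)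
      rw [Complex.le_def] at h0
      simpa using h0.1
    · rw [diagCoeff_zero m Qm, htr]
    · intro ω
      have h5 := hineq ω
      rw [abs_le]
      constructor
      · nlinarith [h5.1, h5.2]
      · nlinarith [h5.1, h5.2]
end

section
/- Let H_w, H_u, H_x be complex Hilbert spaces, let F : H_u → H_x and G : H_w → H_x be bounded linear operators, and suppose J : H_u → H_u is a bounded linear operator inverting 1 + F*F. Set K₀ := −J F* G : H_w → H_u. Then for every bounded linear operator K : H_w → H_u and every w ∈ H_w, ‖F(K₀ w) + G w‖² + ‖K₀ w‖² ≤ ‖F(K w) + G w‖² + ‖K w‖². That is, in the Loewner order, T_{K₀}* T_{K₀} ≤ T_K* T_K for all K, where T_K = [FK + G; K]. -/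
open ContinuousLinearMap

/-!
Write `T_K w = (F u + G w, u)` with `u = K w`. The vector `u₀ = K₀ w` solves the normal equation
`F* (F u₀ + G w) + u₀ = 0` of the regularized least-squares problem `min_u ‖F u + G w‖² + ‖u‖²`,
so `T_K w - T_{K₀} w = (F d, d)` with `d = u - u₀` is orthogonal to `T_{K₀} w` and Pythagoras gives
the inequality.
-/

section RegularizedLeastSquares

variable {𝕜 E X : Type*} [RCLike 𝕜]
  [NormedAddCommGroup E] [InnerProductSpace 𝕜 E] [CompleteSpace E]
  [NormedAddCommGroup X] [InnerProductSpace 𝕜 X] [CompleteSpace X]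

theorem norm_sq_add_norm_sq_eq_of_adjoint_eq_neg {F : E →L[𝕜] X} {g : X} {u₀ : E}
    (hu₀ : adjoint F (F u₀ + g) = -u₀) (u : E) :
    ‖F u + g‖ ^ 2 + ‖u‖ ^ 2 =
      ‖F u₀ + g‖ ^ 2 + ‖u₀‖ ^ 2 + (‖F (u - u₀)‖ ^ 2 + ‖u - u₀‖ ^ 2) := by
  obtain ⟨d, rfl⟩ : ∃ d, u = d + u₀ := ⟨u - u₀, (sub_add_cancel u u₀).symm⟩
  have hcross : RCLike.re (inner 𝕜 (F d) (F u₀ + g)) = -RCLike.re (inner 𝕜 d u₀) := by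
    rw [← adjoint_inner_right, hu₀, inner_neg_right, map_neg]
  rw [add_sub_cancel_right, map_add, add_assoc, norm_add_sq (𝕜 := 𝕜) (F d),
    norm_add_sq (𝕜 := 𝕜) d, hcross]
  ring

theorem norm_sq_add_norm_sq_le_of_adjoint_eq_neg {F : E →L[𝕜] X} {g : X} {u₀ : E}
    (hu₀ : adjoint F (F u₀ + g) = -u₀) (u : E) :
    ‖F u₀ + g‖ ^ 2 + ‖u₀‖ ^ 2 ≤ ‖F u + g‖ ^ 2 + ‖u‖ ^ 2 := by
  rw [norm_sq_add_norm_sq_eq_of_adjoint_eq_neg hu₀ u]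
  exact le_add_of_nonneg_right (by positivity)

theorem adjoint_apply_add_eq_neg_of_mul_eq_one {F : E →L[𝕜] X} {J : E →L[𝕜] E}
    (hJ : (1 + adjoint F ∘L F) * J = 1) (g : X) :
    adjoint F (F (-J (adjoint F g)) + g) = -(-J (adjoint F g)) := by
  have hnormal := DFunLike.congr_fun hJ (adjoint F g)
  simp only [mul_apply_eq_comp, add_apply, one_apply_eq_self, comp_apply] at hnormal
  rw [neg_neg, map_add, map_neg, map_neg, neg_add_eq_sub, sub_eq_iff_eq_add]
  exact hnormal.symm

end RegularizedLeastSquares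

theorem stmt_5_general {Hw Hu Hx : Type*}
    [NormedAddCommGroup Hw] [InnerProductSpace ℂ Hw]
    [NormedAddCommGroup Hu] [InnerProductSpace ℂ Hu] [CompleteSpace Hu]
    [NormedAddCommGroup Hx] [InnerProductSpace ℂ Hx] [CompleteSpace Hx]
    (F : Hu →L[ℂ] Hx) (G : Hw →L[ℂ] Hx) (J : Hu →L[ℂ] Hu)
    (hJ₂ : (1 + adjoint F ∘L F) * J = 1)
    (K₀ : Hw →L[ℂ] Hu) (hK₀ : K₀ = -(J ∘L (adjoint F ∘L G)))
    (K : Hw →L[ℂ] Hu) (w : Hw) :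
    ‖F (K₀ w) + G w‖ ^ 2 + ‖K₀ w‖ ^ 2 ≤ ‖F (K w) + G w‖ ^ 2 + ‖K w‖ ^ 2 := by
  have hK₀w : K₀ w = -J (adjoint F (G w)) := by simp [hK₀]
  have hnormal : adjoint F (F (K₀ w) + G w) = -K₀ w := by
    rw [hK₀w]
    exact adjoint_apply_add_eq_neg_of_mul_eq_one hJ₂ (G w)
  exact norm_sq_add_norm_sq_le_of_adjoint_eq_neg hnormal (K w)

/-- The noncausal controller `K₀ = −(1 + F*F)⁻¹ F* G` minimizes `T_K* T_K` in the
Loewner order: for every bounded controller `K` and every `w`,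
`‖F(K₀ w) + G w‖² + ‖K₀ w‖² ≤ ‖F(K w) + G w‖² + ‖K w‖²`. -/
theorem stmt_5 {Hw Hu Hx : Type*}
    [NormedAddCommGroup Hw] [InnerProductSpace ℂ Hw] [CompleteSpace Hw]
    [NormedAddCommGroup Hu] [InnerProductSpace ℂ Hu] [CompleteSpace Hu]
    [NormedAddCommGroup Hx] [InnerProductSpace ℂ Hx] [CompleteSpace Hx]
    (F : Hu →L[ℂ] Hx) (G : Hw →L[ℂ] Hx) (J : Hu →L[ℂ] Hu)
    (hJ₁ : J * (1 + adjoint F ∘L F) = 1) (hJ₂ : (1 + adjoint F ∘L F) * J = 1)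
    (K₀ : Hw →L[ℂ] Hu) (hK₀ : K₀ = -(J ∘L (adjoint F ∘L G)))
    (K : Hw →L[ℂ] Hu) (w : Hw) :
    ‖F (K₀ w) + G w‖ ^ 2 + ‖K₀ w‖ ^ 2 ≤ ‖F (K w) + G w‖ ^ 2 + ‖K w‖ ^ 2 :=
  stmt_5_general F G J hJ₂ K₀ hK₀ K w
end

section
/- Let A be a unital C*-algebra and let x, n ∈ A be selfadjoint elements that commute (nx = xn). Then the following three conditions hold simultaneously — (a) n − 1 ≥ 0, (b) n − x ≥ 0, (c) (n − 1)(n − x) = 0 — if and only if n = (1/2)(x + 1 + |x − 1|), where |y| denotes the absolute value of a selfadjoint element y (the square root of y² given by continuous functional calculus). In particular, the element (1/2)(x + 1 + |x − 1|) is the unique selfadjoint element commuting with x that satisfies (a), (b), (c). -/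
open scoped ComplexOrder

/-!
Writing `a := x - 1`, the conditions say that `n - 1` and `n - x = (n - 1) - a` are nonnegative
with vanishing product, i.e. that `a = (n - 1) - (n - x)` is the Jordan decomposition of `a`.
By uniqueness of that decomposition this means `n - 1 = a⁺`, and
`(1/2)(x + 1 + |x - 1|) = a⁺ + 1` because `|a| + a = 2 a⁺`.
-/

namespace CFC

lemma eq_posPart_iff {A : Type*} [NonUnitalCStarAlgebra A] [PartialOrder A] [StarOrderedRing A]
    {a b : A} (ha : IsSelfAdjoint a) :
    (0 ≤ b ∧ 0 ≤ b - a ∧ b * (b - a) = 0) ↔ b = a⁺ := by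
  constructor
  · rintro ⟨hb, hba, hmul⟩
    exact ((posPart_negPart_unique (sub_sub_cancel b a).symm hmul hb hba).1).symm
  · rintro rfl
    have hneg : a⁺ - a = a⁻ := by
      rw [sub_eq_iff_eq_add', ← sub_eq_iff_eq_add, posPart_sub_negPart a ha]
    rw [hneg]
    exact ⟨posPart_nonneg a, negPart_nonneg a, posPart_mul_negPart a⟩

lemma half_smul_add_add_sqrt_sq_sub {A : Type*} [CStarAlgebra A] [PartialOrder A]
    [StarOrderedRing A] {a b : A} (ha : IsSelfAdjoint a) (hb : IsSelfAdjoint b) :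
    (1 / 2 : ℂ) • (a + b + sqrt ((a - b) ^ 2)) = (a - b)⁺ + b := by
  have hab : IsSelfAdjoint (a - b) := ha.sub hb
  have hsqrt : sqrt ((a - b) ^ 2) = abs (a - b) := by rw [abs, hab.star_eq, sq]
  have htwice : a + b + sqrt ((a - b) ^ 2) = 2 • ((a - b)⁺ + b) := by
    rw [hsqrt, smul_add, ← abs_add_self (a - b) hab, two_nsmul b]
    abel
  rw [htwice, two_nsmul, ← two_smul ℂ, smul_smul]
  norm_num

end CFC

open CFC in
/-- In a unital C*-algebra, for commuting selfadjoint `x` and `n`, the conditions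
(a) `n − 1 ≥ 0`, (b) `n − x ≥ 0`, (c) `(n−1)(n−x) = 0` hold simultaneously iff
`n = (1/2)(x + 1 + |x − 1|)`, where `|y| = (y²)^{1/2}` via continuous functional
calculus.  In particular, `(1/2)(x + 1 + |x−1|)` is the unique selfadjoint element
commuting with `x` satisfying (a), (b), (c). -/
theorem stmt_6 {A : Type*} [CStarAlgebra A] [PartialOrder A] [StarOrderedRing A]
    (x : A) (hx : IsSelfAdjoint x) :
    (∀ n : A, IsSelfAdjoint n → n * x = x * n →
        ((0 ≤ n - 1 ∧ 0 ≤ n - x ∧ (n - 1) * (n - x) = 0) ↔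
          n = (1 / 2 : ℂ) • (x + 1 + CFC.sqrt ((x - 1) ^ 2)))) ∧
      (∃! n : A, IsSelfAdjoint n ∧ n * x = x * n ∧
        0 ≤ n - 1 ∧ 0 ≤ n - x ∧ (n - 1) * (n - x) = 0) := by
  have hchar (n : A) : (0 ≤ n - 1 ∧ 0 ≤ n - x ∧ (n - 1) * (n - x) = 0) ↔ n = (x - 1)⁺ + 1 := by
    rw [← sub_eq_iff_eq_add, ← eq_posPart_iff (hx.sub (.one A)), sub_sub_sub_cancel_right]
  have hsa : IsSelfAdjoint ((x - 1)⁺ + 1) := (posPart_nonneg (x - 1)).isSelfAdjoint.add (.one A)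
  have hcomm : Commute ((x - 1)⁺ + 1) x :=
    (((Commute.refl x).sub_left (.one_left x)).cfcₙ_real (·⁺)).add_left (.one_left x)
  rw [half_smul_add_add_sqrt_sq_sub hx (.one A)]
  refine ⟨fun n _ _ ↦ hchar n, ⟨_, ⟨hsa, hcomm.eq, (hchar _).2 rfl⟩, ?_⟩⟩
  rintro n ⟨-, -, hn⟩
  exact (hchar n).1 hn
end

section
/- Let d ≥ 1, let Ā ∈ ℂ^{d×d} have spectral radius strictly less than 1, let D̄ ∈ ℂ^{d} be a column vector and c̄ ∈ ℂ^{d} a row vector. Let L : ℝ → ℂ be a continuous 2π-periodic function whose Fourier coefficients L̂(n) := (1/2π)∫₀^{2π} L(ω) e^{−inω} dω vanish for all n ≥ 1. Then: (1) for every ω ∈ ℝ the matrix e^{−iω}I − Ā is invertible; (2) the vector B̄ := (1/2π)∫₀^{2π} (I − e^{iω}Ā)^{−1} D̄ L(ω) dω ∈ ℂ^{d} satisfies B̄ = Σ_{j≥0} Ā^{j} D̄ L̂(−j); and (3) defining H(ω) := c̄ (e^{−iω}I − Ā)^{−1} D̄ · L(ω), for every integer n ≥ 1 the Fourier coefficient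 (1/2π)∫₀^{2π} H(ω) e^{−inω} dω equals c̄ Ā^{n−1} B̄; moreover the function ω ↦ c̄ (e^{−iω}I − Ā)^{−1} B̄ has Fourier coefficients c̄ Ā^{n−1} B̄ at each n ≥ 1 and 0 at each n ≤ 0. -/
open Complex intervalIntegral
open scoped Matrix Real

open MeasureTheory Filter Topology
open scoped NNReal ENNReal

section helpers
attribute [local instance] Matrix.linftyOpNormedRing Matrix.linftyOpNormedAlgebra

variable {d : ℕ}


lemma geom_bound (hd : 1 ≤ d) (A : Matrix (Fin d) (Fin d) ℂ)
    (hA : ∀ z ∈ spectrum ℂ A, ‖z‖ < 1) :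
    ∃ C r : ℝ, 0 ≤ C ∧ 0 ≤ r ∧ r < 1 ∧ ∀ n : ℕ, ‖A ^ n‖ ≤ C * r ^ n := by
  haveI : Nonempty (Fin d) := ⟨⟨0, hd⟩⟩
  have hρ : spectralRadius ℂ A < 1 := by
    have := spectrum.spectralRadius_lt_of_forall_lt (a := A) (r := 1)
      (fun z hz => by simpa [← NNReal.coe_lt_coe, coe_nnnorm] using hA z hz)
    simpa using this
  obtain ⟨r₀, hρr₀, hr₀1⟩ := ENNReal.lt_iff_exists_nnreal_btwn.mp hρ
  set r : ℝ≥0 := r₀ ⊔ 2⁻¹ with hr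
  have hρr : spectralRadius ℂ A < (r : ℝ≥0∞) := hρr₀.trans_le (by exact_mod_cast le_sup_left)
  have hr1 : r < 1 := by
    rw [hr, sup_lt_iff]
    constructor
    · exact_mod_cast hr₀1
    · rw [← NNReal.coe_lt_coe]; norm_num
  have hrpos : (0 : ℝ≥0) < r := lt_of_lt_of_le (by norm_num) le_sup_right
  have hgelf := spectrum.pow_nnnorm_pow_one_div_tendsto_nhds_spectralRadius A
  have hev : ∀ᶠ n : ℕ in atTop, (‖A ^ n‖₊ : ℝ≥0∞) ^ (1 / (n : ℝ)) < (r : ℝ≥0∞) :=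
    hgelf.eventually_lt_const hρr
  obtain ⟨N, hN⟩ := eventually_atTop.mp hev
  have key : ∀ n : ℕ, N + 1 ≤ n → ‖A ^ n‖ ≤ (r : ℝ) ^ n := by
    intro n hn
    have hn1 : 1 ≤ n := le_trans (Nat.le_add_left 1 N) hn
    have h1 := hN n (le_trans (Nat.le_succ N) hn)
    have h2 : ((‖A ^ n‖₊ : ℝ≥0∞) ^ (1 / (n : ℝ))) ^ (n : ℝ) < (r : ℝ≥0∞) ^ (n : ℝ) :=
      ENNReal.rpow_lt_rpow h1 (by exact_mod_cast hn1)
    have hne : (n : ℝ) ≠ 0 := Nat.cast_ne_zero.mpr (by omega)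
    rw [← ENNReal.rpow_mul, one_div, inv_mul_cancel₀ hne, ENNReal.rpow_one] at h2
    have h3 : (‖A ^ n‖₊ : ℝ≥0∞) < ((r ^ n : ℝ≥0) : ℝ≥0∞) := by
      rwa [ENNReal.coe_pow, ← ENNReal.rpow_natCast (r : ℝ≥0∞) n]
    have h4 : ‖A ^ n‖₊ < r ^ n := by exact_mod_cast h3
    have := (NNReal.coe_lt_coe.mpr h4).le
    simpa [coe_nnnorm] using this
  have hS0 : 0 ≤ ∑ i ∈ Finset.range (N + 2), ‖A ^ i‖ / (r : ℝ) ^ i :=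
    Finset.sum_nonneg fun i _ => div_nonneg (norm_nonneg _) (by positivity)
  set C : ℝ := (∑ i ∈ Finset.range (N + 2), ‖A ^ i‖ / (r : ℝ) ^ i) + 1 with hC
  have hCnonneg : 0 ≤ C := by rw [hC]; linarith
  have hC1 : 1 ≤ C := by rw [hC]; linarith
  refine ⟨C, r, hCnonneg, r.coe_nonneg, by exact_mod_cast hr1, fun n => ?_⟩
  have hrn : (0 : ℝ) < (r : ℝ) ^ n := by positivity
  rcases le_or_gt n (N + 1) with h | h
  · have hmem : n ∈ Finset.range (N + 2) := Finset.mem_range.mpr (by omega)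
    have hle : ‖A ^ n‖ / (r : ℝ) ^ n ≤ C := by
      have := Finset.single_le_sum
        (f := fun i => ‖A ^ i‖ / (r : ℝ) ^ i)
        (fun i _ => div_nonneg (norm_nonneg _) (by positivity)) hmem
      rw [hC]
      linarith
    calc ‖A ^ n‖ = ‖A ^ n‖ / (r : ℝ) ^ n * (r : ℝ) ^ n := by field_simp
    _ ≤ C * (r : ℝ) ^ n := by
        exact mul_le_mul_of_nonneg_right hle hrn.le
  · have := key n (by omega)
    calc ‖A ^ n‖ ≤ (r : ℝ) ^ n := this
    _ = 1 * (r : ℝ) ^ n := (one_mul _).symm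
    _ ≤ C * (r : ℝ) ^ n := mul_le_mul_of_nonneg_right hC1 hrn.le


end helpers

section helpers2

lemma hasSum_intervalIntegral {E : Type*} [NormedAddCommGroup E] [NormedSpace ℝ E]
    [CompleteSpace E] (F : ℕ → ℝ → E) (hFc : ∀ j, Continuous (F j)) (bound : ℕ → ℝ)
    (hFb : ∀ j, ∀ ω ∈ Set.Ioc (0:ℝ) (2*π), ‖F j ω‖ ≤ bound j)
    (hsb : Summable bound) :
    HasSum (fun j => ∫ ω in (0:ℝ)..(2*π), F j ω)
      (∫ ω in (0:ℝ)..(2*π), ∑' j, F j ω) := by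
  have h2π : (0:ℝ) ≤ 2*π := by positivity
  simp only [intervalIntegral.integral_of_le h2π]
  have hint : ∀ j, IntegrableOn (F j) (Set.Ioc 0 (2*π)) volume :=
    fun j => (hFc j).integrableOn_Ioc
  have hsum : Summable fun j => ∫ ω in Set.Ioc (0:ℝ) (2*π), ‖F j ω‖ := by
    refine Summable.of_nonneg_of_le (fun j => integral_nonneg fun ω => norm_nonneg _)
      (fun j => ?_) (hsb.mul_right (2*π))
    calc ∫ ω in Set.Ioc (0:ℝ) (2*π), ‖F j ω‖
        ≤ ∫ _ω in Set.Ioc (0:ℝ) (2*π), bound j := by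
          refine setIntegral_mono_on (hint j).norm ?_ measurableSet_Ioc (hFb j)
          exact integrableOn_const measure_Ioc_lt_top.ne
      _ = bound j * (2*π) := by
          rw [setIntegral_const, Real.volume_real_Ioc, sub_zero, max_eq_left h2π,
            smul_eq_mul, mul_comm]
  exact MeasureTheory.hasSum_integral_of_summable_integral_norm hint hsum

lemma Iexp (k : ℤ) :
    ∫ ω in (0:ℝ)..(2*π), Complex.exp (Complex.I * k * ω) =
      if k = 0 then ((2*π : ℝ) : ℂ) else 0 := by
  have hrw : ∀ ω : ℝ, Complex.exp (Complex.I * k * ω) = Complex.exp ((Complex.I * k) * ω) :=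
    fun ω => rfl
  rcases eq_or_ne k 0 with hk | hk
  · simp [hk]
  · have hc : (Complex.I * k : ℂ) ≠ 0 := by
      simp [Complex.I_ne_zero, Complex.ext_iff, hk]
    rw [if_neg hk]
    have := integral_exp_mul_complex (a := (0:ℝ)) (b := 2*π) hc
    simp only [hrw] at *
    rw [this]
    have h1 : Complex.exp (Complex.I * (k:ℂ) * ((2*π : ℝ) : ℂ)) = 1 := by
      have := Complex.exp_int_mul_two_pi_mul_I k
      rw [← this]
      congr 1
      push_cast
      ring
    rw [Complex.ofReal_zero, mul_zero, Complex.exp_zero, h1, sub_self, zero_div]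

end helpers2

section main
attribute [local instance] Matrix.linftyOpNormedRing Matrix.linftyOpNormedAlgebra





variable {d : ℕ}

lemma unit_inv_of_series (A S : Matrix (Fin d) (Fin d) ℂ) (t : ℂ) (ht : t ≠ 0)
    (hS : (1 - t • A) * S = 1) :
    IsUnit (t⁻¹ • (1 : Matrix (Fin d) (Fin d) ℂ) - A) ∧
      (t⁻¹ • (1 : Matrix (Fin d) (Fin d) ℂ) - A)⁻¹ = t • S := by
  have h1 : t⁻¹ • (1 : Matrix (Fin d) (Fin d) ℂ) - A = t⁻¹ • (1 - t • A) := by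
    rw [smul_sub, smul_smul, inv_mul_cancel₀ ht, one_smul]
  have key : (t⁻¹ • (1 : Matrix (Fin d) (Fin d) ℂ) - A) * (t • S) = 1 := by
    rw [h1, Matrix.smul_mul, Matrix.mul_smul, smul_smul, inv_mul_cancel₀ ht, one_smul, hS]
  haveI := invertibleOfRightInverse _ _ key
  exact ⟨isUnit_of_invertible _, Matrix.inv_eq_right_inv key⟩

lemma tsum_mulVec (f : ℕ → Matrix (Fin d) (Fin d) ℂ) (hf : Summable f) (v : Fin d → ℂ) :
    (∑' j, f j) *ᵥ v = ∑' j, f j *ᵥ v := by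
  let φ : Matrix (Fin d) (Fin d) ℂ →ₗ[ℂ] (Fin d → ℂ) :=
    { toFun := fun M => M *ᵥ v
      map_add' := fun M N => Matrix.add_mulVec M N v
      map_smul' := fun c M => Matrix.smul_mulVec c M v }
  exact ContinuousLinearMap.map_tsum (LinearMap.toContinuousLinearMap φ) hf

lemma mulVec_tsum (M : Matrix (Fin d) (Fin d) ℂ) (f : ℕ → (Fin d → ℂ)) (hf : Summable f) :
    M *ᵥ (∑' j, f j) = ∑' j, M *ᵥ f j :=
  ContinuousLinearMap.map_tsum (LinearMap.toContinuousLinearMap (Matrix.mulVecLin M)) hf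

lemma dot_tsum (c : Fin d → ℂ) (f : ℕ → (Fin d → ℂ)) (hf : Summable f) :
    c ⬝ᵥ (∑' j, f j) = ∑' j, c ⬝ᵥ f j := by
  let φ : (Fin d → ℂ) →ₗ[ℂ] ℂ :=
    { toFun := fun w => c ⬝ᵥ w
      map_add' := fun x y => by simp [dotProduct_add]
      map_smul' := fun a x => by simp [dotProduct_smul, smul_eq_mul] }
  exact ContinuousLinearMap.map_tsum (LinearMap.toContinuousLinearMap φ) hf

lemma dot_bound (c v : Fin d → ℂ) : ‖c ⬝ᵥ v‖ ≤ (∑ i, ‖c i‖) * ‖v‖ := by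
  rw [dotProduct, Finset.sum_mul]
  refine (norm_sum_le _ _).trans (Finset.sum_le_sum fun i _ => ?_)
  rw [norm_mul]
  exact mul_le_mul_of_nonneg_left (norm_le_pi_norm v i) (norm_nonneg _)





/-- Finite-dimensional parameterization of the strictly anticausal part: for a stable
matrix `Ā` (spectral radius `< 1`), vectors `D̄`, `c̄`, and a continuous `2π`-periodic
causal symbol `L` (Fourier coefficients vanish for `n ≥ 1`):
(1) `e^{−iω}I − Ā` is invertible for every `ω`;
(2) `B̄ = (1/2π)∫₀^{2π} (I − e^{iω}Ā)^{−1} D̄ L(ω) dω = Σ_{j≥0} Ā^j D̄ L̂(−j)`;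
(3) the transfer function `H(ω) = c̄(e^{−iω}I − Ā)^{−1}D̄·L(ω)` has Fourier
coefficients `c̄ Ā^{n−1} B̄` at every `n ≥ 1`, and `ω ↦ c̄(e^{−iω}I − Ā)^{−1}B̄` has
Fourier coefficients `c̄ Ā^{n−1} B̄` at `n ≥ 1` and `0` at `n ≤ 0`. -/
theorem stmt_14 (d : ℕ) (hd : 1 ≤ d)
    (Abar : Matrix (Fin d) (Fin d) ℂ)
    (hAbar : ∀ z ∈ spectrum ℂ Abar, ‖z‖ < 1)
    (Dbar cbar : Fin d → ℂ)
    (L : ℝ → ℂ) (hL : Continuous L) (hLper : ∀ ω : ℝ, L (ω + 2 * π) = L ω)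
    (Lhat : ℤ → ℂ)
    (hLhat : ∀ n : ℤ, Lhat n =
      (1 / (2 * π) : ℂ) * ∫ ω in (0 : ℝ)..(2 * π), L ω * Complex.exp (-(Complex.I * n * ω)))
    (hLcausal : ∀ n : ℤ, 1 ≤ n → Lhat n = 0)
    (Bbar : Fin d → ℂ)
    (hBbar : Bbar = (1 / (2 * π) : ℝ) •
      ∫ ω in (0 : ℝ)..(2 * π),
        L ω • (((1 : Matrix (Fin d) (Fin d) ℂ) - Complex.exp (Complex.I * ω) • Abar)⁻¹ *ᵥ Dbar)) :
    -- (1) invertibility of `e^{−iω}I − Ā`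
    (∀ ω : ℝ,
      IsUnit (Complex.exp (-(Complex.I * ω)) • (1 : Matrix (Fin d) (Fin d) ℂ) - Abar)) ∧
    -- (2) series representation of `B̄`
    (Bbar = ∑' j : ℕ, Lhat (-(j : ℤ)) • ((Abar ^ j) *ᵥ Dbar)) ∧
    -- (3) Fourier coefficients of `H(ω) = c̄(e^{−iω}I − Ā)^{−1}D̄·L(ω)` at `n ≥ 1`
    (∀ n : ℤ, 1 ≤ n →
      (1 / (2 * π) : ℂ) * (∫ ω in (0 : ℝ)..(2 * π),
          (cbar ⬝ᵥ ((Complex.exp (-(Complex.I * ω)) • (1 : Matrix (Fin d) (Fin d) ℂ) - Abar)⁻¹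
            *ᵥ Dbar)) * L ω * Complex.exp (-(Complex.I * n * ω))) =
        cbar ⬝ᵥ ((Abar ^ (n - 1).toNat) *ᵥ Bbar)) ∧
    -- (3') Fourier coefficients of `ω ↦ c̄(e^{−iω}I − Ā)^{−1}B̄`
    (∀ n : ℤ, 1 ≤ n →
      (1 / (2 * π) : ℂ) * (∫ ω in (0 : ℝ)..(2 * π),
          (cbar ⬝ᵥ ((Complex.exp (-(Complex.I * ω)) • (1 : Matrix (Fin d) (Fin d) ℂ) - Abar)⁻¹
            *ᵥ Bbar)) * Complex.exp (-(Complex.I * n * ω))) =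
        cbar ⬝ᵥ ((Abar ^ (n - 1).toNat) *ᵥ Bbar)) ∧
    (∀ n : ℤ, n ≤ 0 →
      (1 / (2 * π) : ℂ) * (∫ ω in (0 : ℝ)..(2 * π),
          (cbar ⬝ᵥ ((Complex.exp (-(Complex.I * ω)) • (1 : Matrix (Fin d) (Fin d) ℂ) - Abar)⁻¹
            *ᵥ Bbar)) * Complex.exp (-(Complex.I * n * ω))) = 0) := by
  haveI : Nonempty (Fin d) := ⟨⟨0, hd⟩⟩
  obtain ⟨C, r, hC0, hr0, hr1, hbd⟩ := geom_bound hd Abar hAbar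
  have h2πc : (2 * (π:ℂ)) ≠ 0 :=
    mul_ne_zero two_ne_zero (Complex.ofReal_ne_zero.mpr Real.pi_ne_zero)
  set t : ℝ → ℂ := fun ω => Complex.exp (Complex.I * ω) with ht

  have htne : ∀ ω, t ω ≠ 0 := fun ω => Complex.exp_ne_zero _
  have htabs : ∀ ω : ℝ, ‖t ω‖ = 1 := by
    intro ω
    rw [ht]
    simp [Complex.norm_exp]
  have hct : Continuous t := Complex.continuous_exp.comp (continuous_const.mul Complex.continuous_ofReal)
  have hce : ∀ c : ℂ, Continuous (fun ω : ℝ => Complex.exp (-(c * ω))) := fun c =>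
    Complex.continuous_exp.comp ((continuous_const.mul Complex.continuous_ofReal).neg)
  have hexpabs : ∀ (k : ℤ) (ω : ℝ), ‖Complex.exp (-(Complex.I * k * ω))‖ = 1 := by
    intro k ω
    simp [Complex.norm_exp]
  have hgeom : Summable (fun j : ℕ => C * r ^ j) :=
    (summable_geometric_of_lt_one hr0 hr1).mul_left C
  have hsA : ∀ ω : ℝ, Summable (fun j : ℕ => t ω ^ j • Abar ^ j) := by
    intro ω
    refine Summable.of_norm_bounded hgeom fun j => ?_
    rw [norm_smul, norm_pow, htabs, one_pow, one_mul]
    exact hbd j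
  have hprod : ∀ ω : ℝ, (1 - t ω • Abar) * (∑' j : ℕ, t ω ^ j • Abar ^ j) = 1 := by
    intro ω
    have hpow : ∀ j : ℕ, t ω ^ j • Abar ^ j = (t ω • Abar) ^ j := fun j => (smul_pow _ _ _).symm
    have hsA' : Summable fun j : ℕ => (t ω • Abar) ^ j := (hsA ω).congr hpow
    have hlim : Tendsto (fun N => (1 - t ω • Abar) * ∑ j ∈ Finset.range N, (t ω • Abar) ^ j)
        atTop (𝓝 ((1 - t ω • Abar) * ∑' j : ℕ, (t ω • Abar) ^ j)) :=
      (hsA'.hasSum.tendsto_sum_nat).const_mul _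
    have hpart : ∀ N, (1 - t ω • Abar) * ∑ j ∈ Finset.range N, (t ω • Abar) ^ j
        = 1 - (t ω • Abar) ^ N := by
      intro N
      induction N with
      | zero => simp
      | succ N ih =>
        rw [Finset.sum_range_succ, mul_add, ih, sub_mul, one_mul, ← pow_succ']
        abel
    have hzero : Tendsto (fun N : ℕ => (t ω • Abar) ^ N) atTop (𝓝 0) := by
      refine squeeze_zero_norm (fun N => ?_)
        (by simpa using (tendsto_pow_atTop_nhds_zero_of_lt_one hr0 hr1).const_mul C)
      rw [← hpow, norm_smul, norm_pow, htabs, one_pow, one_mul]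
      exact hbd N
    have h2 : Tendsto (fun N : ℕ => 1 - (t ω • Abar) ^ N) atTop (𝓝 (1 - 0)) :=
      tendsto_const_nhds.sub hzero
    have hq := tendsto_nhds_unique (hlim.congr hpart) h2
    rw [sub_zero] at hq
    calc (1 - t ω • Abar) * ∑' j : ℕ, t ω ^ j • Abar ^ j
        = (1 - t ω • Abar) * ∑' j : ℕ, (t ω • Abar) ^ j := by
          exact congrArg _ (tsum_congr hpow)
      _ = 1 := hq
  have hinv1 : ∀ ω : ℝ, (1 - t ω • Abar)⁻¹ = ∑' j : ℕ, t ω ^ j • Abar ^ j :=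
    fun ω => Matrix.inv_eq_right_inv (hprod ω)
  have hexpneg : ∀ ω : ℝ, Complex.exp (-(Complex.I * ω)) = (t ω)⁻¹ := by
    intro ω
    rw [ht]
    exact Complex.exp_neg _
  have hUI := fun ω : ℝ => unit_inv_of_series Abar _ (t ω) (htne ω) (hprod ω)
  have hUnit : ∀ ω : ℝ,
      IsUnit (Complex.exp (-(Complex.I * ω)) • (1 : Matrix (Fin d) (Fin d) ℂ) - Abar) := by
    intro ω
    rw [hexpneg ω]
    exact (hUI ω).1
  have hinv2 : ∀ ω : ℝ,
      (Complex.exp (-(Complex.I * ω)) • (1 : Matrix (Fin d) (Fin d) ℂ) - Abar)⁻¹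
        = t ω • ∑' j : ℕ, t ω ^ j • Abar ^ j := by
    intro ω
    rw [hexpneg ω]
    exact (hUI ω).2
  have hvb : ∀ (v : Fin d → ℂ) (j : ℕ), ‖Abar ^ j *ᵥ v‖ ≤ C * ‖v‖ * r ^ j := by
    intro v j
    calc ‖Abar ^ j *ᵥ v‖ ≤ ‖Abar ^ j‖ * ‖v‖ := Matrix.linfty_opNorm_mulVec _ _
      _ ≤ (C * r ^ j) * ‖v‖ := mul_le_mul_of_nonneg_right (hbd j) (norm_nonneg _)
      _ = C * ‖v‖ * r ^ j := by ring
  have hsv0 : ∀ (v : Fin d → ℂ) (ω : ℝ), Summable fun j : ℕ => t ω ^ j • (Abar ^ j *ᵥ v) := by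
    intro v ω
    refine Summable.of_norm_bounded
      ((summable_geometric_of_lt_one hr0 hr1).mul_left (C * ‖v‖)) fun j => ?_
    rw [norm_smul, norm_pow, htabs, one_pow, one_mul]
    exact hvb v j
  have hsv : ∀ (v : Fin d → ℂ) (ω : ℝ), Summable fun j : ℕ => t ω ^ (j+1) • (Abar ^ j *ᵥ v) := by
    intro v ω
    refine Summable.of_norm_bounded
      ((summable_geometric_of_lt_one hr0 hr1).mul_left (C * ‖v‖)) fun j => ?_
    rw [norm_smul, norm_pow, htabs, one_pow, one_mul]
    exact hvb v j
  have hSv : ∀ (v : Fin d → ℂ) (ω : ℝ),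
      (Complex.exp (-(Complex.I * ω)) • (1 : Matrix (Fin d) (Fin d) ℂ) - Abar)⁻¹ *ᵥ v
        = ∑' j : ℕ, t ω ^ (j+1) • (Abar ^ j *ᵥ v) := by
    intro v ω
    rw [hinv2 ω, Matrix.smul_mulVec, tsum_mulVec _ (hsA ω) v]
    have h1 : ∀ j : ℕ, (t ω ^ j • Abar ^ j) *ᵥ v = t ω ^ j • (Abar ^ j *ᵥ v) :=
      fun j => Matrix.smul_mulVec _ _ _
    rw [tsum_congr h1, ← ((hsv0 v ω).hasSum.const_smul (t ω)).tsum_eq]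
    exact tsum_congr fun j => by rw [smul_smul, ← pow_succ']
  set Kc : ℝ := ∑ i, ‖cbar i‖ with hKcdef
  have hKc0 : 0 ≤ Kc := Finset.sum_nonneg fun i _ => norm_nonneg _
  have hab : ∀ (v : Fin d → ℂ) (j : ℕ),
      ‖cbar ⬝ᵥ (Abar ^ j *ᵥ v)‖ ≤ Kc * (C * ‖v‖) * r ^ j := by
    intro v j
    calc ‖cbar ⬝ᵥ (Abar ^ j *ᵥ v)‖ ≤ Kc * ‖Abar ^ j *ᵥ v‖ := dot_bound _ _
      _ ≤ Kc * (C * ‖v‖ * r ^ j) := mul_le_mul_of_nonneg_left (hvb v j) hKc0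
      _ = Kc * (C * ‖v‖) * r ^ j := by ring
  have hsd : ∀ (v : Fin d → ℂ) (ω : ℝ),
      Summable fun j : ℕ => t ω ^ (j+1) * (cbar ⬝ᵥ (Abar ^ j *ᵥ v)) := by
    intro v ω
    refine Summable.of_norm_bounded
      ((summable_geometric_of_lt_one hr0 hr1).mul_left (Kc * (C * ‖v‖))) fun j => ?_
    rw [norm_mul, norm_pow, htabs, one_pow, one_mul]
    exact hab v j
  have hdotv : ∀ (v : Fin d → ℂ) (ω : ℝ),
      cbar ⬝ᵥ ((Complex.exp (-(Complex.I * ω)) • (1 : Matrix (Fin d) (Fin d) ℂ) - Abar)⁻¹ *ᵥ v)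
        = ∑' j : ℕ, t ω ^ (j+1) * (cbar ⬝ᵥ (Abar ^ j *ᵥ v)) := by
    intro v ω
    rw [hSv v ω, dot_tsum cbar _ (hsv v ω)]
    exact tsum_congr fun j => by rw [dotProduct_smul, smul_eq_mul]

  -- bound for L
  obtain ⟨M₀, hM₀⟩ :=
    (isCompact_Icc (a := (0:ℝ)) (b := 2*π)).exists_bound_of_continuousOn hL.continuousOn
  set ML : ℝ := max M₀ 0 with hMLdef
  have hMLnn : 0 ≤ ML := le_max_right _ _
  have hLb : ∀ ω ∈ Set.Ioc (0:ℝ) (2*π), ‖L ω‖ ≤ ML := fun ω hω =>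
    le_trans (hM₀ ω (Set.Ioc_subset_Icc_self hω)) (le_max_left _ _)
  -- Fourier coefficient identity
  have hM : ∀ p : ℤ, (∫ ω in (0:ℝ)..(2*π), L ω * Complex.exp (Complex.I * p * ω))
      = 2 * (π:ℂ) * Lhat (-p) := by
    intro p
    have h := hLhat (-p)
    simp only [Int.cast_neg, mul_neg, neg_mul, neg_neg] at h
    rw [h]
    field_simp
  have hrsmul : ∀ (x : ℝ) (w : Fin d → ℂ), x • w = ((x:ℂ)) • w := fun x w =>
    funext fun i => by simp [Complex.real_smul]
  -- Part (2)
  have hinv1' : ∀ ω : ℝ,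
      ((1 : Matrix (Fin d) (Fin d) ℂ) - Complex.exp (Complex.I * ω) • Abar)⁻¹ *ᵥ Dbar
        = ∑' j : ℕ, t ω ^ j • (Abar ^ j *ᵥ Dbar) := by
    intro ω
    have hh : Complex.exp (Complex.I * ω) = t ω := by rw [ht]
    rw [hh, hinv1 ω, tsum_mulVec _ (hsA ω) Dbar]
    exact tsum_congr fun j => Matrix.smul_mulVec _ _ _
  have hpt2 : ∀ ω : ℝ,
      L ω • (((1 : Matrix (Fin d) (Fin d) ℂ) - Complex.exp (Complex.I * ω) • Abar)⁻¹ *ᵥ Dbar)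
        = ∑' j : ℕ, (L ω * t ω ^ j) • (Abar ^ j *ᵥ Dbar) := by
    intro ω
    rw [hinv1' ω, ← ((hsv0 Dbar ω).hasSum.const_smul (L ω)).tsum_eq]
    exact tsum_congr fun j => by rw [smul_smul]
  have hhs2 : HasSum (fun j : ℕ => ∫ ω in (0:ℝ)..(2*π), (L ω * t ω ^ j) • (Abar ^ j *ᵥ Dbar))
      (∫ ω in (0:ℝ)..(2*π), ∑' j : ℕ, (L ω * t ω ^ j) • (Abar ^ j *ᵥ Dbar)) := by
    refine hasSum_intervalIntegral _ (fun j => ((hL.mul (hct.pow j)).smul continuous_const))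
      (fun j => ML * (C * ‖Dbar‖) * r ^ j) (fun j ω hω => ?_)
      ((summable_geometric_of_lt_one hr0 hr1).mul_left _)
    rw [norm_smul, norm_mul, norm_pow, htabs, one_pow, mul_one]
    calc ‖L ω‖ * ‖Abar ^ j *ᵥ Dbar‖ ≤ ML * (C * ‖Dbar‖ * r ^ j) :=
        mul_le_mul (hLb ω hω) (hvb Dbar j) (norm_nonneg _) hMLnn
      _ = ML * (C * ‖Dbar‖) * r ^ j := by ring
  have hint2 : ∀ j : ℕ, (∫ ω in (0:ℝ)..(2*π), (L ω * t ω ^ j) • (Abar ^ j *ᵥ Dbar))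
      = (2 * (π:ℂ) * Lhat (-(j:ℤ))) • (Abar ^ j *ᵥ Dbar) := by
    intro j
    rw [intervalIntegral.integral_smul_const]
    congr 1
    have hpw : ∀ ω : ℝ, L ω * t ω ^ j = L ω * Complex.exp (Complex.I * (((j:ℤ)):ℂ) * ω) := by
      intro ω
      rw [ht]
      congr 1
      rw [← Complex.exp_nat_mul]
      congr 1
      push_cast
      ring
    rw [intervalIntegral.integral_congr (fun ω _ => hpw ω)]
    exact hM (j:ℤ)
  have hBs : HasSum (fun j : ℕ => Lhat (-(j:ℤ)) • (Abar ^ j *ᵥ Dbar)) Bbar := by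
    have h := hhs2
    simp only [hint2] at h
    have hB2 : Bbar = (1/(2*π):ℝ) •
        (∫ ω in (0:ℝ)..(2*π), ∑' j : ℕ, (L ω * t ω ^ j) • (Abar ^ j *ᵥ Dbar)) := by
      rw [hBbar]
      congr 1
      exact intervalIntegral.integral_congr fun ω _ => hpt2 ω
    have h' := h.const_smul ((1/(2*π):ℝ))
    rw [← hB2] at h'
    have hfe : (fun j : ℕ => (1/(2*π):ℝ) • ((2 * (π:ℂ) * Lhat (-(j:ℤ))) • (Abar ^ j *ᵥ Dbar)))
        = fun j : ℕ => Lhat (-(j:ℤ)) • (Abar ^ j *ᵥ Dbar) := by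
      funext j
      rw [hrsmul, smul_smul]
      congr 1
      push_cast
      field_simp
    rwa [hfe] at h'
  -- dot CLM
  have hφc : ∃ φc : (Fin d → ℂ) →L[ℂ] ℂ, ∀ w, φc w = cbar ⬝ᵥ w := by
    refine ⟨LinearMap.toContinuousLinearMap
      { toFun := fun w => cbar ⬝ᵥ w
        map_add' := fun x y => by simp [dotProduct_add]
        map_smul' := fun a x => by simp [dotProduct_smul, smul_eq_mul] }, fun w => rfl⟩
  obtain ⟨φc, hφc⟩ := hφc
  refine ⟨hUnit, hBs.tsum_eq.symm, ?_, ?_, ?_⟩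
  -- Part (3)
  · intro n hn
    set m := (n-1).toNat with hmdef
    have hm : (m:ℤ) = n - 1 := Int.toNat_of_nonneg (by omega)
    have hpt3 : ∀ ω : ℝ,
        (cbar ⬝ᵥ ((Complex.exp (-(Complex.I * ω)) • (1 : Matrix (Fin d) (Fin d) ℂ) - Abar)⁻¹
          *ᵥ Dbar)) * L ω * Complex.exp (-(Complex.I * n * ω))
        = ∑' j : ℕ, t ω ^ (j+1) * (cbar ⬝ᵥ (Abar ^ j *ᵥ Dbar)) * L ω
            * Complex.exp (-(Complex.I * n * ω)) := by
      intro ω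
      rw [hdotv Dbar ω, ← (((hsd Dbar ω).hasSum.mul_right (L ω)).mul_right _).tsum_eq]
    have hcont3 : ∀ j : ℕ, Continuous fun ω : ℝ =>
        t ω ^ (j+1) * (cbar ⬝ᵥ (Abar ^ j *ᵥ Dbar)) * L ω
          * Complex.exp (-(Complex.I * n * ω)) := fun j =>
      (((hct.pow (j+1)).mul continuous_const).mul hL).mul (hce _)
    have hhs3 : HasSum (fun j : ℕ => ∫ ω in (0:ℝ)..(2*π),
        t ω ^ (j+1) * (cbar ⬝ᵥ (Abar ^ j *ᵥ Dbar)) * L ω * Complex.exp (-(Complex.I * n * ω)))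
        (∫ ω in (0:ℝ)..(2*π), ∑' j : ℕ,
          t ω ^ (j+1) * (cbar ⬝ᵥ (Abar ^ j *ᵥ Dbar)) * L ω
            * Complex.exp (-(Complex.I * n * ω))) := by
      refine hasSum_intervalIntegral _ hcont3 (fun j => Kc * (C * ‖Dbar‖) * ML * r ^ j)
        (fun j ω hω => ?_) ((summable_geometric_of_lt_one hr0 hr1).mul_left _)
      rw [norm_mul, norm_mul, norm_mul, norm_pow, htabs, one_pow, one_mul, hexpabs, mul_one]
      calc ‖cbar ⬝ᵥ (Abar ^ j *ᵥ Dbar)‖ * ‖L ω‖ ≤ (Kc * (C * ‖Dbar‖) * r ^ j) * ML :=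
          mul_le_mul (hab Dbar j) (hLb ω hω) (norm_nonneg _) (by positivity)
        _ = Kc * (C * ‖Dbar‖) * ML * r ^ j := by ring
    have hint3 : ∀ j : ℕ, (∫ ω in (0:ℝ)..(2*π),
        t ω ^ (j+1) * (cbar ⬝ᵥ (Abar ^ j *ᵥ Dbar)) * L ω * Complex.exp (-(Complex.I * n * ω)))
        = cbar ⬝ᵥ (Abar ^ j *ᵥ Dbar) * (2 * (π:ℂ) * Lhat (n - 1 - j)) := by
      intro j
      have hpw : ∀ ω : ℝ,
          t ω ^ (j+1) * (cbar ⬝ᵥ (Abar ^ j *ᵥ Dbar)) * L ω * Complex.exp (-(Complex.I * n * ω))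
          = cbar ⬝ᵥ (Abar ^ j *ᵥ Dbar)
              * (L ω * Complex.exp (Complex.I * ((((j:ℤ) + 1 - n : ℤ)):ℂ) * ω)) := by
        intro ω
        have he : t ω ^ (j+1) * Complex.exp (-(Complex.I * n * ω))
            = Complex.exp (Complex.I * ((((j:ℤ) + 1 - n : ℤ)):ℂ) * ω) := by
          rw [ht]
          rw [← Complex.exp_nat_mul, ← Complex.exp_add]
          congr 1
          push_cast
          ring
        calc t ω ^ (j+1) * (cbar ⬝ᵥ (Abar ^ j *ᵥ Dbar)) * L ω
              * Complex.exp (-(Complex.I * n * ω))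
            = (t ω ^ (j+1) * Complex.exp (-(Complex.I * n * ω)))
                * (cbar ⬝ᵥ (Abar ^ j *ᵥ Dbar)) * L ω := by ring
          _ = _ := by rw [he]; ring
      rw [intervalIntegral.integral_congr (fun ω _ => hpw ω),
        intervalIntegral.integral_const_mul, hM]
      rw [show -((j:ℤ) + 1 - n) = n - 1 - (j:ℤ) by ring]
    have hEq : (∫ ω in (0:ℝ)..(2*π),
        (cbar ⬝ᵥ ((Complex.exp (-(Complex.I * ω)) • (1 : Matrix (Fin d) (Fin d) ℂ) - Abar)⁻¹
          *ᵥ Dbar)) * L ω * Complex.exp (-(Complex.I * n * ω)))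
        = ∫ ω in (0:ℝ)..(2*π), ∑' j : ℕ,
          t ω ^ (j+1) * (cbar ⬝ᵥ (Abar ^ j *ᵥ Dbar)) * L ω
            * Complex.exp (-(Complex.I * n * ω)) :=
      intervalIntegral.integral_congr fun ω _ => hpt3 ω
    rw [hEq, ← hhs3.tsum_eq]
    simp only [hint3]
    rw [← tsum_mul_left]
    have hterm : ∀ j : ℕ, (1 / (2 * π) : ℂ) * (cbar ⬝ᵥ (Abar ^ j *ᵥ Dbar)
        * (2 * (π:ℂ) * Lhat (n - 1 - j)))
        = cbar ⬝ᵥ (Abar ^ j *ᵥ Dbar) * Lhat (n - 1 - j) := by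
      intro j
      field_simp
    rw [tsum_congr hterm]
    have hgsum : Summable fun j : ℕ => cbar ⬝ᵥ (Abar ^ j *ᵥ Dbar) * Lhat (n - 1 - (j:ℤ)) := by
      have h0 := hhs3.summable
      simp only [hint3] at h0
      exact ((h0.mul_left ((1 / (2 * π) : ℂ))).congr hterm)
    -- RHS as a tsum
    have hmulv : HasSum (fun k : ℕ => Lhat (-(k:ℤ)) • (Abar ^ (m+k) *ᵥ Dbar))
        (Abar ^ m *ᵥ Bbar) := by
      have h := (LinearMap.toContinuousLinearMap (Matrix.mulVecLin (Abar ^ m))).hasSum hBs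
      have h2 : ∀ k : ℕ,
          (LinearMap.toContinuousLinearMap (Matrix.mulVecLin (Abar ^ m)))
            (Lhat (-(k:ℤ)) • (Abar ^ k *ᵥ Dbar)) = Lhat (-(k:ℤ)) • (Abar ^ (m+k) *ᵥ Dbar) := by
        intro k
        simp only [LinearMap.coe_toContinuousLinearMap', Matrix.mulVecLin_apply,
          Matrix.mulVec_smul, Matrix.mulVec_mulVec, pow_add]
      simpa only [h2, LinearMap.coe_toContinuousLinearMap', Matrix.mulVecLin_apply] using h
    have hdots : HasSum (fun k : ℕ => Lhat (-(k:ℤ)) * (cbar ⬝ᵥ (Abar ^ (m+k) *ᵥ Dbar)))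
        (cbar ⬝ᵥ (Abar ^ m *ᵥ Bbar)) := by
      have h := φc.hasSum hmulv
      have h2 : ∀ k : ℕ, φc (Lhat (-(k:ℤ)) • (Abar ^ (m+k) *ᵥ Dbar))
          = Lhat (-(k:ℤ)) * (cbar ⬝ᵥ (Abar ^ (m+k) *ᵥ Dbar)) := by
        intro k
        rw [_root_.map_smul, hφc, smul_eq_mul]
      rw [hφc] at h
      simpa only [h2] using h
    rw [← hdots.tsum_eq]
    rw [← Summable.sum_add_tsum_nat_add m hgsum]
    have hz : (∑ i ∈ Finset.range m, cbar ⬝ᵥ (Abar ^ i *ᵥ Dbar) * Lhat (n - 1 - (i:ℤ))) = 0 := by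
      refine Finset.sum_eq_zero fun i hi => ?_
      have hi' : (i:ℤ) < (m:ℤ) := by exact_mod_cast Finset.mem_range.mp hi
      rw [hLcausal (n - 1 - (i:ℤ)) (by omega), mul_zero]
    rw [hz, zero_add]
    refine tsum_congr fun k => ?_
    have h1 : ((n:ℤ) - 1 - ((k+m:ℕ):ℤ)) = -(k:ℤ) := by
      push_cast
      omega
    rw [h1, Nat.add_comm k m, mul_comm]
  -- Part (3') for n ≥ 1
  · intro n hn
    set m := (n-1).toNat with hmdef
    have hm : (m:ℤ) = n - 1 := Int.toNat_of_nonneg (by omega)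
    have hpt : ∀ ω : ℝ,
        (cbar ⬝ᵥ ((Complex.exp (-(Complex.I * ω)) • (1 : Matrix (Fin d) (Fin d) ℂ) - Abar)⁻¹
          *ᵥ Bbar)) * Complex.exp (-(Complex.I * n * ω))
        = ∑' j : ℕ, t ω ^ (j+1) * (cbar ⬝ᵥ (Abar ^ j *ᵥ Bbar))
            * Complex.exp (-(Complex.I * n * ω)) := by
      intro ω
      rw [hdotv Bbar ω, ← ((hsd Bbar ω).hasSum.mul_right _).tsum_eq]
    have hhs : HasSum (fun j : ℕ => ∫ ω in (0:ℝ)..(2*π),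
        t ω ^ (j+1) * (cbar ⬝ᵥ (Abar ^ j *ᵥ Bbar)) * Complex.exp (-(Complex.I * n * ω)))
        (∫ ω in (0:ℝ)..(2*π), ∑' j : ℕ,
          t ω ^ (j+1) * (cbar ⬝ᵥ (Abar ^ j *ᵥ Bbar)) * Complex.exp (-(Complex.I * n * ω))) := by
      refine hasSum_intervalIntegral _
        (fun j => ((hct.pow (j+1)).mul continuous_const).mul (hce _))
        (fun j => Kc * (C * ‖Bbar‖) * r ^ j)
        (fun j ω hω => ?_) ((summable_geometric_of_lt_one hr0 hr1).mul_left _)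
      rw [norm_mul, norm_mul, norm_pow, htabs, one_pow, one_mul, hexpabs, mul_one]
      exact hab Bbar j
    have hint : ∀ j : ℕ, (∫ ω in (0:ℝ)..(2*π),
        t ω ^ (j+1) * (cbar ⬝ᵥ (Abar ^ j *ᵥ Bbar)) * Complex.exp (-(Complex.I * n * ω)))
        = cbar ⬝ᵥ (Abar ^ j *ᵥ Bbar)
            * (if ((j:ℤ) + 1 - n) = 0 then ((2*π : ℝ) : ℂ) else 0) := by
      intro j
      have hpw : ∀ ω : ℝ,
          t ω ^ (j+1) * (cbar ⬝ᵥ (Abar ^ j *ᵥ Bbar)) * Complex.exp (-(Complex.I * n * ω))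
          = cbar ⬝ᵥ (Abar ^ j *ᵥ Bbar)
              * Complex.exp (Complex.I * ((((j:ℤ) + 1 - n : ℤ)):ℂ) * ω) := by
        intro ω
        have he : t ω ^ (j+1) * Complex.exp (-(Complex.I * n * ω))
            = Complex.exp (Complex.I * ((((j:ℤ) + 1 - n : ℤ)):ℂ) * ω) := by
          rw [ht]
          rw [← Complex.exp_nat_mul, ← Complex.exp_add]
          congr 1
          push_cast
          ring
        calc t ω ^ (j+1) * (cbar ⬝ᵥ (Abar ^ j *ᵥ Bbar)) * Complex.exp (-(Complex.I * n * ω))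
            = (t ω ^ (j+1) * Complex.exp (-(Complex.I * n * ω)))
                * (cbar ⬝ᵥ (Abar ^ j *ᵥ Bbar)) := by ring
          _ = _ := by rw [he]; ring
      rw [intervalIntegral.integral_congr (fun ω _ => hpw ω),
        intervalIntegral.integral_const_mul, Iexp]
    have hEq : (∫ ω in (0:ℝ)..(2*π),
        (cbar ⬝ᵥ ((Complex.exp (-(Complex.I * ω)) • (1 : Matrix (Fin d) (Fin d) ℂ) - Abar)⁻¹
          *ᵥ Bbar)) * Complex.exp (-(Complex.I * n * ω)))
        = ∫ ω in (0:ℝ)..(2*π), ∑' j : ℕ,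
          t ω ^ (j+1) * (cbar ⬝ᵥ (Abar ^ j *ᵥ Bbar)) * Complex.exp (-(Complex.I * n * ω)) :=
      intervalIntegral.integral_congr fun ω _ => hpt ω
    rw [hEq, ← hhs.tsum_eq]
    simp only [hint]
    rw [← tsum_mul_left]
    rw [tsum_eq_single m ?_]
    · rw [if_pos (by omega), mul_comm (cbar ⬝ᵥ (Abar ^ m *ᵥ Bbar)), ← mul_assoc]
      have : (1 / (2 * π) : ℂ) * ((2*π : ℝ) : ℂ) = 1 := by
        push_cast
        field_simp
      rw [this, one_mul]
    · intro j hj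
      rw [if_neg, mul_zero, mul_zero]
      intro hc
      exact hj (by omega)
  -- Part (3') for n ≤ 0
  · intro n hn
    have hpt : ∀ ω : ℝ,
        (cbar ⬝ᵥ ((Complex.exp (-(Complex.I * ω)) • (1 : Matrix (Fin d) (Fin d) ℂ) - Abar)⁻¹
          *ᵥ Bbar)) * Complex.exp (-(Complex.I * n * ω))
        = ∑' j : ℕ, t ω ^ (j+1) * (cbar ⬝ᵥ (Abar ^ j *ᵥ Bbar))
            * Complex.exp (-(Complex.I * n * ω)) := by
      intro ω
      rw [hdotv Bbar ω, ← ((hsd Bbar ω).hasSum.mul_right _).tsum_eq]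
    have hhs : HasSum (fun j : ℕ => ∫ ω in (0:ℝ)..(2*π),
        t ω ^ (j+1) * (cbar ⬝ᵥ (Abar ^ j *ᵥ Bbar)) * Complex.exp (-(Complex.I * n * ω)))
        (∫ ω in (0:ℝ)..(2*π), ∑' j : ℕ,
          t ω ^ (j+1) * (cbar ⬝ᵥ (Abar ^ j *ᵥ Bbar)) * Complex.exp (-(Complex.I * n * ω))) := by
      refine hasSum_intervalIntegral _
        (fun j => ((hct.pow (j+1)).mul continuous_const).mul (hce _))
        (fun j => Kc * (C * ‖Bbar‖) * r ^ j)
        (fun j ω hω => ?_) ((summable_geometric_of_lt_one hr0 hr1).mul_left _)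
      rw [norm_mul, norm_mul, norm_pow, htabs, one_pow, one_mul, hexpabs, mul_one]
      exact hab Bbar j
    have hint : ∀ j : ℕ, (∫ ω in (0:ℝ)..(2*π),
        t ω ^ (j+1) * (cbar ⬝ᵥ (Abar ^ j *ᵥ Bbar)) * Complex.exp (-(Complex.I * n * ω)))
        = cbar ⬝ᵥ (Abar ^ j *ᵥ Bbar)
            * (if ((j:ℤ) + 1 - n) = 0 then ((2*π : ℝ) : ℂ) else 0) := by
      intro j
      have hpw : ∀ ω : ℝ,
          t ω ^ (j+1) * (cbar ⬝ᵥ (Abar ^ j *ᵥ Bbar)) * Complex.exp (-(Complex.I * n * ω))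
          = cbar ⬝ᵥ (Abar ^ j *ᵥ Bbar)
              * Complex.exp (Complex.I * ((((j:ℤ) + 1 - n : ℤ)):ℂ) * ω) := by
        intro ω
        have he : t ω ^ (j+1) * Complex.exp (-(Complex.I * n * ω))
            = Complex.exp (Complex.I * ((((j:ℤ) + 1 - n : ℤ)):ℂ) * ω) := by
          rw [ht]
          rw [← Complex.exp_nat_mul, ← Complex.exp_add]
          congr 1
          push_cast
          ring
        calc t ω ^ (j+1) * (cbar ⬝ᵥ (Abar ^ j *ᵥ Bbar)) * Complex.exp (-(Complex.I * n * ω))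
            = (t ω ^ (j+1) * Complex.exp (-(Complex.I * n * ω)))
                * (cbar ⬝ᵥ (Abar ^ j *ᵥ Bbar)) := by ring
          _ = _ := by rw [he]; ring
      rw [intervalIntegral.integral_congr (fun ω _ => hpw ω),
        intervalIntegral.integral_const_mul, Iexp]
    have hEq : (∫ ω in (0:ℝ)..(2*π),
        (cbar ⬝ᵥ ((Complex.exp (-(Complex.I * ω)) • (1 : Matrix (Fin d) (Fin d) ℂ) - Abar)⁻¹
          *ᵥ Bbar)) * Complex.exp (-(Complex.I * n * ω)))
        = ∫ ω in (0:ℝ)..(2*π), ∑' j : ℕ,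
          t ω ^ (j+1) * (cbar ⬝ᵥ (Abar ^ j *ᵥ Bbar)) * Complex.exp (-(Complex.I * n * ω)) :=
      intervalIntegral.integral_congr fun ω _ => hpt ω
    rw [hEq, ← hhs.tsum_eq]
    simp only [hint]
    have hz : ∀ j : ℕ, cbar ⬝ᵥ (Abar ^ j *ᵥ Bbar)
        * (if ((j:ℤ) + 1 - n) = 0 then ((2*π : ℝ) : ℂ) else 0) = 0 := by
      intro j
      rw [if_neg (by omega), mul_zero]
    rw [tsum_congr hz, tsum_zero, mul_zero]

end main
end

section
/- Let 𝕋 = ℝ/2πℤ and let m, L₁, L₂ : 𝕋 → ℂ be essentially bounded measurable functions such that: (i) L₁ and L₂ are invertible with 1/L₁, 1/L₂ essentially bounded; (ii) each of L₁, L₂, 1/L₁, 1/L₂ has vanishing Fourier coefficients at every negative index n < 0; and (iii) |L₁(ω)| ≤ |L₂(ω)| for almost every ω. Then Σ_{n<0} |(m·L₁)^^(n)|² ≤ Σ_{n<0} |(m·L₂)^^(n)|², where g^^(n) = (1/2π)∫₀^{2π} g(ω)e^{−inω} dω denotes the n-th Fourier coefficient. -/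
open MeasureTheory AddCircle
open scoped Real

instance : Fact (0 < 2 * Real.pi) := ⟨by positivity⟩

open Filter
open scoped ComplexConjugate

namespace Stmt15Aux

notation "μ2π" => (@haarAddCircle (2 * Real.pi) _)

lemma fourierCoeff_congr_ae {f g : AddCircle (2 * Real.pi) → ℂ} (h : f =ᵐ[μ2π] g) (n : ℤ) :
    fourierCoeff f n = fourierCoeff g n := by
  unfold fourierCoeff
  exact integral_congr_ae (h.mono fun x hx => by dsimp only; rw [hx])

lemma norm_fourier_apply (n : ℤ) (x : AddCircle (2 * Real.pi)) : ‖fourier n x‖ = 1 :=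
  Circle.norm_coe _

lemma memℒp_fourier (n : ℤ) : MemLp (fun x : AddCircle (2 * Real.pi) => fourier n x) ⊤ μ2π :=
  memLp_top_of_bound ((fourier n).continuous.aestronglyMeasurable) 1
    (Eventually.of_forall fun x => le_of_eq (norm_fourier_apply n x))

lemma integrable_fourier_smul {f : AddCircle (2 * Real.pi) → ℂ} (hf : MemLp f 2 μ2π) (n : ℤ) :
    Integrable (fun t => fourier n t • f t) μ2π := by
  have hfi : Integrable f μ2π := hf.integrable (by norm_num)
  simpa [smul_eq_mul] using hfi.bdd_mul (c := 1) ((fourier n).continuous.aestronglyMeasurable)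
    (Eventually.of_forall fun x => le_of_eq (norm_fourier_apply n x))

lemma fourierCoeff_add {f g : AddCircle (2 * Real.pi) → ℂ} (hf : MemLp f 2 μ2π)
    (hg : MemLp g 2 μ2π) (n : ℤ) :
    fourierCoeff (fun ω => f ω + g ω) n = fourierCoeff f n + fourierCoeff g n := by
  unfold fourierCoeff
  rw [← integral_add (integrable_fourier_smul hf (-n)) (integrable_fourier_smul hg (-n))]
  exact integral_congr_ae (Eventually.of_forall fun ω => by simp [smul_eq_mul, mul_add])

/-- product of two ሴℒp functions, with defeq-friendly statement -/
lemma memℒp_mul_of_top_left {f g : AddCircle (2 * Real.pi) → ℂ} (hf : MemLp f ⊤ μ2π)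
    (hg : MemLp g 2 μ2π) : MemLp (fun ω => f ω * g ω) 2 μ2π := by
  have := hg.smul (φ := f) hf (r := 2)
  exact this.ae_eq (Eventually.of_forall fun ω => by simp [smul_eq_mul, mul_comm])

lemma memℒp_mul_top {f g : AddCircle (2 * Real.pi) → ℂ} (hf : MemLp f ⊤ μ2π)
    (hg : MemLp g ⊤ μ2π) : MemLp (fun ω => f ω * g ω) ⊤ μ2π := by
  have := hf.smul (φ := g) hg (p := ⊤) (r := ⊤)
  exact this.ae_eq (Eventually.of_forall fun ω => by simp [smul_eq_mul, mul_comm])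

lemma memℒp_conj {f : AddCircle (2 * Real.pi) → ℂ} (hf : MemLp f ⊤ μ2π) :
    MemLp (fun ω => conj (f ω)) ⊤ μ2π := by
  refine hf.of_le_mul (c := 1) ?_ (Eventually.of_forall fun ω => by simp)
  exact Complex.continuous_conj.comp_aestronglyMeasurable hf.1

/-- Key convolution-vanishing lemma: the product of a bounded causal symbol and a
square-integrable causal function is causal. -/
lemma conv_zero {f g : AddCircle (2 * Real.pi) → ℂ} (hf : MemLp f ⊤ μ2π) (hg : MemLp g 2 μ2π)
    (hfc : ∀ j : ℤ, j < 0 → fourierCoeff f j = 0)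
    (hgc : ∀ j : ℤ, j < 0 → fourierCoeff g j = 0)
    {n : ℤ} (hn : n < 0) : fourierCoeff (fun ω => f ω * g ω) n = 0 := by
  set Q : AddCircle (2 * Real.pi) → ℂ := fun ω => conj (f ω) * fourier n ω with hQdef
  have hQ2 : MemLp Q 2 μ2π :=
    memℒp_mul_of_top_left (memℒp_conj hf) ((memℒp_fourier n).mono_exponent le_top)
  set FQ : Lp ℂ 2 μ2π := hQ2.toLp Q with hFQ
  set G2 : Lp ℂ 2 μ2π := hg.toLp g with hG2
  have key : fourierCoeff (fun ω => f ω * g ω) n = inner ℂ FQ G2 := by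
    rw [MeasureTheory.L2.inner_def]
    unfold fourierCoeff
    apply integral_congr_ae
    filter_upwards [hQ2.coeFn_toLp, hg.coeFn_toLp] with ω h1 h2
    rw [h1, h2, hQdef]
    simp only [RCLike.inner_apply, map_mul, Complex.conj_conj, smul_eq_mul]
    rw [← fourier_neg (n := n)]
    ring
  have term_zero : ∀ k : ℤ,
      (inner ℂ FQ (fourierBasis k) : ℂ) * inner ℂ (fourierBasis k) G2 = 0 := by
    intro k
    have hb : ∀ (v : Lp ℂ 2 μ2π),
        (inner ℂ (fourierBasis k) v : ℂ) = fourierCoeff (⇑v) k := by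
      intro v
      rw [← HilbertBasis.repr_apply_apply, fourierBasis_repr]
    rcases lt_or_ge k 0 with hk | hk
    · rw [hb G2]
      have : fourierCoeff (⇑G2) k = fourierCoeff g k :=
        fourierCoeff_congr_ae (hg.coeFn_toLp) k
      rw [this, hgc k hk, mul_zero]
    · have h1 : (inner ℂ FQ (fourierBasis k) : ℂ)
          = conj (fourierCoeff (⇑FQ) k) := by
        rw [← hb FQ, ← inner_conj_symm]
      have h2 : fourierCoeff (⇑FQ) k = fourierCoeff Q k :=
        fourierCoeff_congr_ae (hQ2.coeFn_toLp) k
      have h3 : conj (fourierCoeff Q k) = fourierCoeff f (n - k) := by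
        unfold fourierCoeff
        rw [← integral_conj]
        apply integral_congr_ae
        apply Eventually.of_forall
        intro ω
        simp only [hQdef, smul_eq_mul, map_mul, Complex.conj_conj]
        rw [show -(n - k) = -n + k by ring, fourier_add, ← fourier_neg (n := n),
          ← fourier_neg (n := (-k)), neg_neg]
        ring
      have h4 : fourierCoeff f (n - k) = 0 := hfc _ (by omega)
      rw [h1, h2, h3, h4, zero_mul]
  have expand : (inner ℂ FQ G2 : ℂ)
      = ∑' k : ℤ, (inner ℂ FQ (fourierBasis k) : ℂ) * inner ℂ (fourierBasis k) G2 :=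
    (fourierBasis.tsum_inner_mul_inner FQ G2).symm
  rw [key, expand, tsum_congr term_zero, tsum_zero]

lemma summable_sq (F : Lp ℂ 2 μ2π) :
    Summable (fun i : ℤ => ‖fourierCoeff (⇑F) i‖ ^ 2) := by
  have h1 := (lp.memℓp (fourierBasis.repr F)).summable (p := 2) (by norm_num)
  refine h1.congr fun i => ?_
  rw [fourierBasis_repr]
  rw [show ((2 : ENNReal)).toReal = ((2 : ℕ) : ℝ) by norm_num, Real.rpow_natCast]

end Stmt15Aux

open Stmt15Aux

/-- Monotonicity of the anticausal energy: if `L₁, L₂` are essentially bounded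
canonical (causal and causally invertible, i.e. `L_i` and `1/L_i` have vanishing
Fourier coefficients at negative indices) symbols on the circle with
`|L₁| ≤ |L₂|` a.e., then for any essentially bounded `m` the energy of the strictly
anticausal part of `m·L₁` is at most that of `m·L₂`:
`Σ_{n<0} |(m·L₁)^(n)|² ≤ Σ_{n<0} |(m·L₂)^(n)|²`. -/
theorem stmt_15 (m L₁ L₂ : AddCircle (2 * Real.pi) → ℂ)
    (hm_meas : Measurable m) (hL₁_meas : Measurable L₁) (hL₂_meas : Measurable L₂)
    (hm : MemLp m ⊤ (@haarAddCircle (2 * Real.pi) _))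
    (hL₁ : MemLp L₁ ⊤ (@haarAddCircle (2 * Real.pi) _))
    (hL₂ : MemLp L₂ ⊤ (@haarAddCircle (2 * Real.pi) _))
    (hL₁ne : ∀ ω, L₁ ω ≠ 0) (hL₂ne : ∀ ω, L₂ ω ≠ 0)
    (hL₁inv : MemLp (fun ω => (L₁ ω)⁻¹) ⊤ (@haarAddCircle (2 * Real.pi) _))
    (hL₂inv : MemLp (fun ω => (L₂ ω)⁻¹) ⊤ (@haarAddCircle (2 * Real.pi) _))
    (hL₁c : ∀ n : ℤ, n < 0 → fourierCoeff L₁ n = 0)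
    (hL₂c : ∀ n : ℤ, n < 0 → fourierCoeff L₂ n = 0)
    (hL₁invc : ∀ n : ℤ, n < 0 → fourierCoeff (fun ω => (L₁ ω)⁻¹) n = 0)
    (hL₂invc : ∀ n : ℤ, n < 0 → fourierCoeff (fun ω => (L₂ ω)⁻¹) n = 0)
    (hmono : ∀ᵐ ω ∂(@haarAddCircle (2 * Real.pi) _), ‖L₁ ω‖ ≤ ‖L₂ ω‖) :
    (∑' n : {n : ℤ // n < 0}, ‖fourierCoeff (fun ω => m ω * L₁ ω) (n : ℤ)‖ ^ 2) ≤
      (∑' n : {n : ℤ // n < 0}, ‖fourierCoeff (fun ω => m ω * L₂ ω) (n : ℤ)‖ ^ 2) := by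
  -- the symbol h = L₁ / L₂, bounded and causal with |h| ≤ 1 a.e.
  set h : AddCircle (2 * Real.pi) → ℂ := fun ω => L₁ ω * (L₂ ω)⁻¹ with hhdef
  have hh_top : MemLp h ⊤ μ2π := memℒp_mul_top hL₁ hL₂inv
  have hh_causal : ∀ j : ℤ, j < 0 → fourierCoeff h j = 0 := fun j hj =>
    conv_zero hL₁ (hL₂inv.mono_exponent le_top) hL₁c hL₂invc hj
  have hh_le_one : ∀ᵐ ω ∂μ2π, ‖h ω‖ ≤ 1 := by
    filter_upwards [hmono] with ω hω
    rw [hhdef]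
    simp only [norm_mul, norm_inv]
    have h2 : 0 < ‖L₂ ω‖ := norm_pos_iff.mpr (hL₂ne ω)
    calc ‖L₁ ω‖ * ‖L₂ ω‖⁻¹ ≤ ‖L₂ ω‖ * ‖L₂ ω‖⁻¹ := by gcongr
      _ = 1 := mul_inv_cancel₀ h2.ne'
  -- g = m * L₂
  set g : AddCircle (2 * Real.pi) → ℂ := fun ω => m ω * L₂ ω with hgdef
  have hg2 : MemLp g 2 μ2π := memℒp_mul_of_top_left hm (hL₂.mono_exponent le_top)
  set G : Lp ℂ 2 μ2π := hg2.toLp g with hG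
  have hGg : fourierCoeff (⇑G) = fourierCoeff g := funext fun k =>
    fourierCoeff_congr_ae hg2.coeFn_toLp k
  -- the anticausal part of g
  set c : ℤ → ℂ := fun k => if k < 0 then fourierCoeff g k else 0 with hcdef
  have hc : Memℓp c 2 := by
    apply memℓp_gen
    rw [show ((2 : ENNReal)).toReal = ((2 : ℕ) : ℝ) by norm_num]
    simp_rw [Real.rpow_natCast]
    refine Summable.of_nonneg_of_le (fun k => by positivity) ?_ ((summable_sq G).congr
      (fun i => by rw [hGg]))
    intro k
    rw [hcdef]
    by_cases hk : k < 0 <;> simp [hk]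
  set Gm : Lp ℂ 2 μ2π := fourierBasis.repr.symm (⟨c, hc⟩ : lp (fun _ : ℤ => ℂ) 2) with hGm
  have hGmc : ∀ k : ℤ, fourierCoeff (⇑Gm) k = c k := by
    intro k
    rw [← fourierBasis_repr, hGm, LinearIsometryEquiv.apply_symm_apply]
  set Gp : Lp ℂ 2 μ2π := G - Gm with hGp
  have hGpc : ∀ k : ℤ, k < 0 → fourierCoeff (⇑Gp) k = 0 := by
    intro k hk
    have hsub : (⇑Gp : AddCircle (2 * Real.pi) → ℂ) =ᵐ[μ2π] fun ω => G ω + (-1 : ℂ) * Gm ω := by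
      filter_upwards [Lp.coeFn_sub G Gm] with ω hω
      rw [hGp, hω, Pi.sub_apply]; ring
    rw [Stmt15Aux.fourierCoeff_congr_ae hsub, fourierCoeff_add (Lp.memLp G)
      (((Lp.memLp Gm)).const_mul (-1)), fourierCoeff.const_mul _ (-1), hGmc,
      congrFun hGg, hcdef]
    simp [hk]
  -- the key identity for negative coefficients
  have hW2 : MemLp (fun ω => Gm ω * h ω) 2 μ2π := by
    have := memℒp_mul_of_top_left hh_top (Lp.memLp Gm)
    exact this.ae_eq (Eventually.of_forall fun ω => mul_comm _ _)
  have key : ∀ n : ℤ, n < 0 →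
      fourierCoeff (fun ω => m ω * L₁ ω) n = fourierCoeff (fun ω => Gm ω * h ω) n := by
    intro n hn
    have e1 : (fun ω => m ω * L₁ ω) = fun ω => g ω * h ω := by
      funext ω
      rw [hgdef, hhdef]
      dsimp only
      rw [mul_assoc, mul_comm (L₂ ω), mul_assoc, inv_mul_cancel₀ (hL₂ne ω), mul_one]
    have e2 : (fun ω => g ω * h ω) =ᵐ[μ2π] fun ω => Gm ω * h ω + Gp ω * h ω := by
      filter_upwards [hg2.coeFn_toLp, Lp.coeFn_sub G Gm] with ω h1 h2
      have h3 : Gp ω = G ω - Gm ω := by rw [hGp, h2, Pi.sub_apply]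
      rw [h3, h1]
      ring
    rw [e1, fourierCoeff_congr_ae e2 n, fourierCoeff_add hW2 ?hp n]
    case hp =>
      have := memℒp_mul_of_top_left hh_top (Lp.memLp Gp)
      exact this.ae_eq (Eventually.of_forall fun ω => mul_comm _ _)
    have hzero : fourierCoeff (fun ω => Gp ω * h ω) n = 0 := by
      have := conv_zero hh_top (Lp.memLp Gp) hh_causal hGpc hn
      have e3 : (fun ω => h ω * Gp ω) = fun ω => Gp ω * h ω := funext fun ω => mul_comm _ _
      rwa [e3] at this
    rw [hzero, add_zero]
  -- now estimate
  set W : Lp ℂ 2 μ2π := hW2.toLp _ with hW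
  have hWc : ∀ n : ℤ, fourierCoeff (⇑W) n = fourierCoeff (fun ω => Gm ω * h ω) n :=
    fun n => fourierCoeff_congr_ae hW2.coeFn_toLp n
  have step1 : (∑' n : {n : ℤ // n < 0}, ‖fourierCoeff (fun ω => m ω * L₁ ω) (n : ℤ)‖ ^ 2)
      ≤ ∑' n : ℤ, ‖fourierCoeff (⇑W) n‖ ^ 2 := by
    have e : (∑' n : {n : ℤ // n < 0}, ‖fourierCoeff (fun ω => m ω * L₁ ω) (n : ℤ)‖ ^ 2)
        = ∑' n : {n : ℤ // n < 0}, ‖fourierCoeff (⇑W) (n : ℤ)‖ ^ 2 :=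
      tsum_congr fun ⟨n, hn⟩ => by rw [key n hn, hWc]
    rw [e]
    exact Summable.tsum_subtype_le (fun n : ℤ => ‖fourierCoeff (⇑W) n‖ ^ 2) {n : ℤ | n < 0}
      (fun n => by positivity) (summable_sq W)
  have step2 : (∑' n : ℤ, ‖fourierCoeff (⇑W) n‖ ^ 2) ≤ ∑' n : ℤ, ‖fourierCoeff (⇑Gm) n‖ ^ 2 := by
    rw [tsum_sq_fourierCoeff W, tsum_sq_fourierCoeff Gm]
    have hIW : Integrable (fun t => ‖W t‖ ^ 2) μ2π :=
      (memLp_two_iff_integrable_sq_norm (Lp.aestronglyMeasurable W)).mp (Lp.memLp W)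
    have hIG : Integrable (fun t => ‖Gm t‖ ^ 2) μ2π :=
      (memLp_two_iff_integrable_sq_norm (Lp.aestronglyMeasurable Gm)).mp (Lp.memLp Gm)
    refine integral_mono_ae hIW hIG ?_
    filter_upwards [hW2.coeFn_toLp, hh_le_one] with ω h1 h2
    rw [h1]
    have : ‖Gm ω * h ω‖ ≤ ‖Gm ω‖ := by
      rw [norm_mul]
      calc ‖Gm ω‖ * ‖h ω‖ ≤ ‖Gm ω‖ * 1 := by gcongr
        _ = ‖Gm ω‖ := mul_one _
    exact pow_le_pow_left₀ (norm_nonneg _) this 2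
  have step3 : (∑' n : ℤ, ‖fourierCoeff (⇑Gm) n‖ ^ 2)
      = ∑' n : {n : ℤ // n < 0}, ‖fourierCoeff (fun ω => m ω * L₂ ω) (n : ℤ)‖ ^ 2 := by
    have e1 : (∑' n : {n : ℤ // n < 0}, ‖fourierCoeff (fun ω => m ω * L₂ ω) (n : ℤ)‖ ^ 2)
        = ∑' n : ℤ, Set.indicator {n : ℤ | n < 0}
            (fun k => ‖fourierCoeff (fun ω => m ω * L₂ ω) k‖ ^ 2) n :=
      tsum_subtype {n : ℤ | n < 0} (fun k => ‖fourierCoeff (fun ω => m ω * L₂ ω) k‖ ^ 2)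
    rw [e1]
    apply tsum_congr
    intro k
    rw [hGmc]
    by_cases hk : k < 0
    · simp [Set.indicator_apply, Set.mem_setOf_eq, hk, hcdef, hgdef]
    · simp [Set.indicator_apply, Set.mem_setOf_eq, hk, hcdef]
  calc (∑' n : {n : ℤ // n < 0}, ‖fourierCoeff (fun ω => m ω * L₁ ω) (n : ℤ)‖ ^ 2)
      ≤ ∑' n : ℤ, ‖fourierCoeff (⇑W) n‖ ^ 2 := step1
    _ ≤ ∑' n : ℤ, ‖fourierCoeff (⇑Gm) n‖ ^ 2 := step2
    _ = _ := step3
end
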